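/- Let G be a finite group that is the join of subnormal subgroups A₁, …, Aₙ. Then the generalized Fitting height satisfies h*(G) = max{h*(Aᵢ) : 1 ≤ i ≤ n}. -/

import Mathlib

open scoped Pointwise

/-! Subgroup-valued functions ("functorials") on finite groups, Plotkin's upper products,
iterated series and heights, the generalized Fitting subgroup, `p`-soluble radicals,
non-`p`-soluble length, Fitting formations, and (mutually/totally) permutable products. -/

/-- A subgroup-valued function on all finite groups. -/
abbrev GFun : Type 1 := ∀ (G : Type) [Group G] [Finite G], Subgroup G

/-- A functorial: `γ` commutes with isomorphisms, `f (γ G) = γ (f G)`. -/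
def IsoInvariant (γ : GFun) : Prop :=
  ∀ (G H : Type) [Group G] [Finite G] [Group H] [Finite H] (e : G ≃* H),
    (γ G).map e.toMonoidHom = γ H

/-- Property (F1): `f (γ G) ⊆ γ (f G)` for every epimorphism `f`. -/
def SatF1 (γ : GFun) : Prop :=
  ∀ (G H : Type) [Group G] [Finite G] [Group H] [Finite H] (f : G →* H),
    Function.Surjective f → (γ G).map f ≤ γ H

/-- Property (F2): `γ N ⊆ γ G` for every normal subgroup `N ⊴ G`. -/
def SatF2 (γ : GFun) : Prop :=
  ∀ (G : Type) [Group G] [Finite G] (N : Subgroup G), N.Normal →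
    (γ ↥N).map N.subtype ≤ γ G

/-- Property (F3): `γ G ∩ N ⊆ γ N` for every normal subgroup `N ⊴ G`. -/
def SatF3 (γ : GFun) : Prop :=
  ∀ (G : Type) [Group G] [Finite G] (N : Subgroup G), N.Normal →
    (γ G).comap N.subtype ≤ γ ↥N

/-- `γ` is idempotent: `γ (γ G) = γ G`. -/
def IdemF (γ : GFun) : Prop :=
  ∀ (G : Type) [Group G] [Finite G], (γ ↥(γ G)).map (γ G).subtype = γ G

/-- `N ⊆ γ G` for every normal subgroup `N ⊴ G` with `γ N = N`. -/
def PlotkinClosed (γ : GFun) : Prop :=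
  ∀ (G : Type) [Group G] [Finite G] (N : Subgroup G), N.Normal → γ ↥N = ⊤ → N ≤ γ G

/-- `γ G` is a normal subgroup of `G` for every finite group `G`. -/
def NormalValued (γ : GFun) : Prop :=
  ∀ (G : Type) [Group G] [Finite G], (γ G).Normal

/-- A functorial takes normal (indeed characteristic) values. -/
theorem IsoInvariant.normalValued {γ : GFun} (h : IsoInvariant γ) : NormalValued γ := by
  intro G _ _
  refine ⟨fun n hn g => ?_⟩
  have key := h G G (MulAut.conj g)
  rw [← key]
  exact ⟨n, hn, by simp [MulAut.conj]⟩

theorem normal_sSup {G : Type} [Group G] {S : Set (Subgroup G)}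
    (hS : ∀ N ∈ S, N.Normal) : (sSup S).Normal := by
  have hU : sSup S = Subgroup.closure (⋃ N ∈ S, (N : Set G)) := by
    apply le_antisymm
    · exact sSup_le fun N hN x hx =>
        Subgroup.subset_closure (Set.mem_iUnion₂.2 ⟨N, hN, hx⟩)
    · rw [Subgroup.closure_le]
      intro x hx
      obtain ⟨N, hN, hxN⟩ := Set.mem_iUnion₂.1 hx
      exact le_sSup hN hxN
  refine ⟨fun n hn g => ?_⟩
  rw [hU] at hn ⊢
  induction hn using Subgroup.closure_induction with
  | mem x hx =>
    obtain ⟨N, hN, hxN⟩ := Set.mem_iUnion₂.1 hx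
    exact Subgroup.subset_closure (Set.mem_iUnion₂.2 ⟨N, hN, (hS N hN).conj_mem x hxN g⟩)
  | one => simpa using Subgroup.one_mem _
  | mul x y hx hy ihx ihy =>
    have : g * (x * y) * g⁻¹ = (g * x * g⁻¹) * (g * y * g⁻¹) := by group
    rw [this]; exact mul_mem ihx ihy
  | inv x hx ihx =>
    have : g * x⁻¹ * g⁻¹ = (g * x * g⁻¹)⁻¹ := by group
    rw [this]; exact inv_mem ihx

theorem normal_inf {G : Type} [Group G] {M N : Subgroup G} (hM : M.Normal) (hN : N.Normal) :
    (M ⊓ N).Normal :=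
  ⟨fun n hn g => ⟨hM.conj_mem n hn.1 g, hN.conj_mem n hn.2 g⟩⟩

/-- The upper product `γ₂ ⋆ γ₁`: the preimage in `G` of `γ₁ (G ⧸ γ₂ G)`. -/
def starF (γ₂ γ₁ : GFun) (h : NormalValued γ₂) : GFun :=
  fun G _ _ =>
    letI : (γ₂ G).Normal := h G
    (γ₁ (G ⧸ γ₂ G)).comap (QuotientGroup.mk' (γ₂ G))

theorem starF_normalValued (γ₂ γ₁ : GFun) (h2 : NormalValued γ₂) (h1 : NormalValued γ₁) :
    NormalValued (starF γ₂ γ₁ h2) := by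
  intro G _ _
  letI : (γ₂ G).Normal := h2 G
  exact Subgroup.Normal.comap (h1 _) _

/-- The iterated `γ`-series of a finite group, with normality of each term. -/
def gSeriesAux (γ : GFun) (h : NormalValued γ) (G : Type) [Group G] [Finite G] :
    ℕ → {H : Subgroup G // H.Normal}
  | 0 => ⟨⊥, inferInstance⟩
  | n + 1 =>
    let P := gSeriesAux γ h G n
    letI : P.1.Normal := P.2
    ⟨(γ (G ⧸ P.1)).comap (QuotientGroup.mk' P.1), Subgroup.Normal.comap (h _) _⟩

/-- The iterated `γ`-series: `γ₍₀₎(G) = 1` and `γ₍ᵢ₊₁₎(G)` is the preimage of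
`γ (G ⧸ γ₍ᵢ₎(G))`. -/
def gSeries (γ : GFun) (h : NormalValued γ) (G : Type) [Group G] [Finite G] (n : ℕ) :
    Subgroup G := (gSeriesAux γ h G n).1

/-- The `γ`-height: the least `h` with `γ₍ₕ₎(G) = G`, or `∞` if no such `h` exists. -/
noncomputable def gHeight (γ : GFun) (h : NormalValued γ) (G : Type) [Group G] [Finite G] :
    ℕ∞ := sInf {n : ℕ∞ | ∃ m : ℕ, n = (m : ℕ∞) ∧ gSeries γ h G m = ⊤}

/-- `H/K` is a chief factor of `G`. -/
def IsChiefFactor {G : Type} [Group G] (K H : Subgroup G) : Prop :=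
  K.Normal ∧ H.Normal ∧ K < H ∧
    ∀ L : Subgroup G, L.Normal → K ≤ L → L ≤ H → L = K ∨ L = H

/-- A finite group is quasinilpotent if every element induces an inner automorphism on
every chief factor. -/
def IsQuasinilpotent (G : Type) [Group G] [Finite G] : Prop :=
  ∀ K H : Subgroup G, IsChiefFactor K H →
    ∀ g : G, ∃ h ∈ H, ∀ x ∈ H, g * x * g⁻¹ * (h * x * h⁻¹)⁻¹ ∈ K

/-- A finite group is `p`-soluble if every chief factor is a `p`-group or a `p'`-group. -/
def IsPSoluble (p : ℕ) (G : Type) [Group G] [Finite G] : Prop :=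
  ∀ K H : Subgroup G, IsChiefFactor K H →
    (∀ x ∈ H, ∃ n : ℕ, x ^ (p ^ n) ∈ K) ∨
    (∀ x ∈ H, ∃ n : ℕ, 0 < n ∧ ¬ p ∣ n ∧ x ^ n ∈ K)

/-- The generalized Fitting subgroup `F*(G)`: the largest normal quasinilpotent subgroup. -/
def genFitting : GFun := fun G _ _ => sSup {N : Subgroup G | N.Normal ∧ IsQuasinilpotent ↥N}

theorem genFitting_normal : NormalValued genFitting :=
  fun _ _ _ => normal_sSup fun _ hN => hN.1

/-- The generalized Fitting height `h*`. -/
noncomputable def hStar (G : Type) [Group G] [Finite G] : ℕ∞ :=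
  gHeight genFitting genFitting_normal G

/-- The `p`-soluble radical `R_p(G)`: the largest normal `p`-soluble subgroup. -/
def pRadical (p : ℕ) : GFun := fun G _ _ => sSup {N : Subgroup G | N.Normal ∧ IsPSoluble p ↥N}

theorem pRadical_normal (p : ℕ) : NormalValued (pRadical p) :=
  fun _ _ _ => normal_sSup fun _ hN => hN.1

/-- `F̄_p = R_p ⋆ F* ⋆ R_p`. -/
def pBarFitting (p : ℕ) : GFun :=
  starF (starF (pRadical p) genFitting (pRadical_normal p)) (pRadical p)
    (starF_normalValued _ _ (pRadical_normal p) genFitting_normal)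

theorem pBarFitting_normal (p : ℕ) : NormalValued (pBarFitting p) :=
  starF_normalValued _ _ _ (pRadical_normal p)

/-- The Frattini subgroup, as a subgroup-valued function on finite groups. -/
def frattiniF : GFun := fun G _ _ => frattini G

theorem frattiniF_normal : NormalValued frattiniF := fun G _ _ => by
  show (frattini G).Normal
  exact Subgroup.normal_of_characteristic _

/-- Förster's functorial `F̃ = Φ ⋆ F*`: `F̃(G)/Φ(G) = F*(G/Φ(G))`. -/
def tildeFitting : GFun := starF frattiniF genFitting frattiniF_normal

theorem tildeFitting_normal : NormalValued tildeFitting :=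
  starF_normalValued _ _ frattiniF_normal genFitting_normal

/-- The non-Frattini length `h̃`. -/
noncomputable def hTilde (G : Type) [Group G] [Finite G] : ℕ∞ :=
  gHeight tildeFitting tildeFitting_normal G

/-- `Q` is a (non-empty) direct product of simple groups (nonabelian ones if `nonab`). -/
def IsDirectProdOfSimple (nonab : Bool) (Q : Type) [Group Q] : Prop :=
  ∃ (n : ℕ) (S : Fin n → GrpCat.{0}), 0 < n ∧ (∀ i, IsSimpleGroup (S i)) ∧
    (nonab → ∀ i, ∃ a b : (S i), a * b ≠ b * a) ∧
    Nonempty (Q ≃* ((i : Fin n) → (S i)))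

/-- The factor `H/K` (for `K ⊴ G`) is `p`-soluble. -/
def FactorPSoluble (p : ℕ) {G : Type} [Group G] [Finite G] (K H : Subgroup G)
    (hK : K.Normal) : Prop :=
  letI : (K.subgroupOf H).Normal := hK.subgroupOf H
  IsPSoluble p (↥H ⧸ K.subgroupOf H)

/-- The factor `H/K` is a non-empty direct product of (nonabelian) simple groups. -/
def FactorSimpleProd (nonab : Bool) {G : Type} [Group G] [Finite G] (K H : Subgroup G)
    (hK : K.Normal) : Prop :=
  letI : (K.subgroupOf H).Normal := hK.subgroupOf H
  IsDirectProdOfSimple nonab (↥H ⧸ K.subgroupOf H)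

/-- `G` has a normal series `1 = G₀ ≤ G₁ ≤ ⋯ ≤ G₂ₕ₊₁ = G` in which the factors
`Gᵢ₊₁/Gᵢ` for `i` even are `p`-soluble (possibly trivial) and for `i` odd are
non-empty direct products of nonabelian simple groups. -/
def HasLambdaSeries (p : ℕ) (G : Type) [Group G] [Finite G] (h : ℕ) : Prop :=
  ∃ c : Fin (2 * h + 2) → Subgroup G, Monotone c ∧ c 0 = ⊥ ∧ c (Fin.last _) = ⊤ ∧
    ∃ hn : ∀ i, (c i).Normal,
      ∀ i : Fin (2 * h + 1),
        if (i : ℕ) % 2 = 0 then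
          FactorPSoluble p (c i.castSucc) (c i.succ) (hn _)
        else
          FactorSimpleProd true (c i.castSucc) (c i.succ) (hn _)

/-- The non-`p`-soluble length `λ_p(G)`: the least `h` admitting such a series. -/
noncomputable def lambdaP (p : ℕ) (G : Type) [Group G] [Finite G] : ℕ∞ :=
  sInf {n : ℕ∞ | ∃ h : ℕ, n = (h : ℕ∞) ∧ HasLambdaSeries p G h}

/-- A class of finite groups. -/
abbrev GClass : Type 1 := ∀ (G : Type) [Group G] [Finite G], Prop

/-- Closed under homomorphic images. -/
def QuotClosed (𝔉 : GClass) : Prop :=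
  ∀ (G H : Type) [Group G] [Finite G] [Group H] [Finite H] (f : G →* H),
    Function.Surjective f → 𝔉 G → 𝔉 H

/-- If `G/M, G/N ∈ 𝔉` then `G/(M ∩ N) ∈ 𝔉`. -/
def InterClosed (𝔉 : GClass) : Prop :=
  ∀ (G : Type) [Group G] [Finite G] (M N : Subgroup G) (hM : M.Normal) (hN : N.Normal),
    (letI := hM; 𝔉 (G ⧸ M)) → (letI := hN; 𝔉 (G ⧸ N)) →
      (letI : (M ⊓ N).Normal := normal_inf hM hN; 𝔉 (G ⧸ (M ⊓ N)))

/-- Closed under normal subgroups. -/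
def NormalClosed (𝔉 : GClass) : Prop :=
  ∀ (G : Type) [Group G] [Finite G] (N : Subgroup G), N.Normal → 𝔉 G → 𝔉 ↥N

/-- A group is in `𝔉` whenever it is the product of two normal `𝔉`-subgroups. -/
def NormalProdClosed (𝔉 : GClass) : Prop :=
  ∀ (G : Type) [Group G] [Finite G] (M N : Subgroup G), M.Normal → N.Normal →
    𝔉 ↥M → 𝔉 ↥N → M ⊔ N = ⊤ → 𝔉 G

/-- A Fitting formation. -/
def IsFittingFormation (𝔉 : GClass) : Prop :=
  QuotClosed 𝔉 ∧ InterClosed 𝔉 ∧ NormalClosed 𝔉 ∧ NormalProdClosed 𝔉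

/-- The `𝔉`-radical: the largest normal `𝔉`-subgroup. -/
def fRadical (𝔉 : GClass) : GFun := fun G _ _ => sSup {N : Subgroup G | N.Normal ∧ 𝔉 ↥N}

theorem fRadical_normal (𝔉 : GClass) : NormalValued (fRadical 𝔉) :=
  fun _ _ _ => normal_sSup fun _ hN => hN.1

/-- The `𝔉`-residual: the smallest normal subgroup with quotient in `𝔉`. -/
def fResidual (𝔉 : GClass) (G : Type) [Group G] [Finite G] : Subgroup G :=
  sInf {N : Subgroup G | ∃ hN : N.Normal, (letI := hN; 𝔉 (G ⧸ N))}

/-- The `𝔉`-height `h_𝔉`. -/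
noncomputable def fHeight (𝔉 : GClass) (G : Type) [Group G] [Finite G] : ℕ∞ :=
  gHeight (fRadical 𝔉) (fRadical_normal 𝔉) G

/-- The `n`-fold formation product `𝔉ⁿ` (with `𝔉⁰` the class of trivial groups):
`G ∈ 𝔉ⁿ⁺¹` iff the `𝔉`-residual `G^𝔉` lies in `𝔉ⁿ`. -/
def fPow (𝔉 : GClass) : ℕ → GClass
  | 0 => fun G _ _ => Subsingleton G
  | n + 1 => fun G _ _ => fPow 𝔉 n ↥(fResidual 𝔉 G)

/-- `A` is a subnormal subgroup of `G`. -/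
def IsSubnormalIn {G : Type} [Group G] (A : Subgroup G) : Prop :=
  ∃ (n : ℕ) (c : Fin (n + 1) → Subgroup G), c 0 = A ∧ c (Fin.last n) = ⊤ ∧
    ∀ i : Fin n, c i.castSucc ≤ c i.succ ∧ ((c i.castSucc).subgroupOf (c i.succ)).Normal

/-- `G` is the mutually permutable product of its subgroups `A` and `B`. -/
def MutuallyPermutable {G : Type} [Group G] (A B : Subgroup G) : Prop :=
  (A : Set G) * (B : Set G) = Set.univ ∧
  (∀ H : Subgroup G, H ≤ B → (A : Set G) * (H : Set G) = (H : Set G) * (A : Set G)) ∧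
  (∀ K : Subgroup G, K ≤ A → (B : Set G) * (K : Set G) = (K : Set G) * (B : Set G))

/-- `G` is the totally permutable product of its subgroups `A` and `B`. -/
def TotallyPermutable {G : Type} [Group G] (A B : Subgroup G) : Prop :=
  (A : Set G) * (B : Set G) = Set.univ ∧
  ∀ H K : Subgroup G, H ≤ A → K ≤ B → (H : Set G) * (K : Set G) = (K : Set G) * (H : Set G)


/-! ### Auxiliary development for Statement 10 -/

section AuxQN

variable {G : Type} [Group G]

/-- `X` is invariant under conjugation by elements of `N`. -/
def SgInv (N X : Subgroup G) : Prop := ∀ n ∈ N, ∀ x ∈ X, n * x * n⁻¹ ∈ X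

theorem SgInv.of_normal {N X : Subgroup G} (h : X.Normal) : SgInv N X :=
  fun n _ x hx => h.conj_mem x hx n

theorem SgInv.inf {N X Y : Subgroup G} (hX : SgInv N X) (hY : SgInv N Y) :
    SgInv N (X ⊓ Y) := fun n hn x hx => ⟨hX n hn x hx.1, hY n hn x hx.2⟩

theorem sgInv_top_iff {X : Subgroup G} : SgInv ⊤ X ↔ X.Normal :=
  ⟨fun h => ⟨fun x hx n => h n trivial x hx⟩, fun h => SgInv.of_normal h⟩

theorem SgInv.conjMap_le {n : G} {N X : Subgroup G} (h : SgInv N X) (hn : n ∈ N) :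
    X.map (MulAut.conj n).toMonoidHom ≤ X := by
  rintro _ ⟨x, hx, rfl⟩
  simpa using h n hn x hx

theorem conjMap_eq_of_sgInv {n : G} {N X : Subgroup G} (h : SgInv N X) (hn : n ∈ N) :
    X.map (MulAut.conj n).toMonoidHom = X := by
  refine le_antisymm (h.conjMap_le hn) ?_
  intro x hx
  refine ⟨n⁻¹ * x * n, ?_, by simp [mul_assoc]⟩
  simpa [mul_assoc] using h n⁻¹ (N.inv_mem hn) x hx

theorem SgInv.sup {N X Y : Subgroup G} (hX : SgInv N X) (hY : SgInv N Y) :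
    SgInv N (X ⊔ Y) := by
  intro n hn x hx
  have : (X ⊔ Y).map (MulAut.conj n).toMonoidHom = X ⊔ Y := by
    rw [Subgroup.map_sup, conjMap_eq_of_sgInv hX hn, conjMap_eq_of_sgInv hY hn]
  rw [← this]
  exact ⟨x, hx, by simp⟩

theorem SgInv.mono_left {N' N X : Subgroup G} (h : SgInv N X) (hle : N' ≤ N) :
    SgInv N' X := fun n hn => h n (hle hn)

/-- Decomposition of elements of a join when the second factor normalizes the first. -/
theorem mem_sup_decomp {X B : Subgroup G} (h : ∀ b ∈ B, ∀ x ∈ X, b * x * b⁻¹ ∈ X)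
    {g : G} (hg : g ∈ X ⊔ B) : ∃ x ∈ X, ∃ b ∈ B, g = x * b := by
  let S : Subgroup G :=
    { carrier := {g | ∃ x ∈ X, ∃ b ∈ B, g = x * b}
      one_mem' := ⟨1, X.one_mem, 1, B.one_mem, by simp⟩
      mul_mem' := by
        rintro p q ⟨x₁, hx₁, b₁, hb₁, rfl⟩ ⟨x₂, hx₂, b₂, hb₂, rfl⟩
        exact ⟨x₁ * (b₁ * x₂ * b₁⁻¹), X.mul_mem hx₁ (h b₁ hb₁ x₂ hx₂), b₁ * b₂,
          B.mul_mem hb₁ hb₂, by group⟩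
      inv_mem' := by
        rintro p ⟨x, hx, b, hb, rfl⟩
        exact ⟨b⁻¹ * x⁻¹ * b⁻¹⁻¹, h b⁻¹ (B.inv_mem hb) x⁻¹ (X.inv_mem hx), b⁻¹,
          B.inv_mem hb, by group⟩ }
  have hle : X ⊔ B ≤ S := by
    refine sup_le (fun x hx => ⟨x, hx, 1, B.one_mem, by simp⟩)
      (fun b hb => ⟨1, X.one_mem, b, hb, by simp⟩)
  exact hle hg

/-- `g` acts on `H/K` as an inner automorphism induced by an element of `H`. -/
def ActsInner (K H : Subgroup G) (g : G) : Prop :=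
  ∃ h ∈ H, ∀ x ∈ H, g * x * g⁻¹ * (h * x * h⁻¹)⁻¹ ∈ K

theorem ActsInner.of_mem {K H : Subgroup G} {g : G} (hg : g ∈ H) : ActsInner K H g := by
  refine ⟨g, hg, fun x _ => ?_⟩
  have : g * x * g⁻¹ * (g * x * g⁻¹)⁻¹ = 1 := by group
  rw [this]; exact K.one_mem

theorem ActsInner.of_centralizes {K H : Subgroup G} {g : G}
    (h : ∀ x ∈ H, g * x * g⁻¹ * x⁻¹ ∈ K) : ActsInner K H g := by
  refine ⟨1, H.one_mem, fun x hx => ?_⟩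
  have : g * x * g⁻¹ * (1 * x * 1⁻¹)⁻¹ = g * x * g⁻¹ * x⁻¹ := by group
  rw [this]; exact h x hx

theorem ActsInner.mul {K H : Subgroup G} (hK : K.Normal) {g₁ g₂ : G}
    (h₁ : ActsInner K H g₁) (h₂ : ActsInner K H g₂) : ActsInner K H (g₁ * g₂) := by
  obtain ⟨a₁, ha₁, hc₁⟩ := h₁
  obtain ⟨a₂, ha₂, hc₂⟩ := h₂
  refine ⟨a₁ * a₂, H.mul_mem ha₁ ha₂, fun x hx => ?_⟩
  have hb : a₂ * x * a₂⁻¹ ∈ H := H.mul_mem (H.mul_mem ha₂ hx) (H.inv_mem ha₂)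
  have key : g₁ * g₂ * x * (g₁ * g₂)⁻¹ * (a₁ * a₂ * x * (a₁ * a₂)⁻¹)⁻¹ =
      (g₁ * ((g₂ * x * g₂⁻¹) * (a₂ * x * a₂⁻¹)⁻¹) * g₁⁻¹) *
      (g₁ * (a₂ * x * a₂⁻¹) * g₁⁻¹ * (a₁ * (a₂ * x * a₂⁻¹) * a₁⁻¹)⁻¹) := by
    group
  rw [key]
  exact K.mul_mem (hK.conj_mem _ (hc₂ x hx) g₁) (hc₁ _ hb)

end AuxQN

section QNclosure

theorem isQuasinilpotent_of_subsingleton (G : Type) [Group G] [Finite G]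
    [Subsingleton G] : IsQuasinilpotent G := by
  intro K H hch
  exfalso
  refine hch.2.2.1.ne (Subgroup.ext fun x => ?_)
  have : x = 1 := Subsingleton.elim _ _
  simp [this, K.one_mem, H.one_mem]

theorem IsQuasinilpotent.of_surjective {G H : Type} [Group G] [Finite G] [Group H]
    [Finite H] (f : G →* H) (hf : Function.Surjective f)
    (hG : IsQuasinilpotent G) : IsQuasinilpotent H := by
  intro K' H' hch g'
  have hKn : (K'.comap f).Normal := hch.1.comap f
  have hHn : (H'.comap f).Normal := hch.2.1.comap f
  have hkerK : f.ker ≤ K'.comap f := fun x hx => by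
    simp only [Subgroup.mem_comap]
    rw [MonoidHom.mem_ker.mp hx]; exact K'.one_mem
  have hmapK : (K'.comap f).map f = K' := Subgroup.map_comap_eq_self_of_surjective hf _
  have hmapH : (H'.comap f).map f = H' := Subgroup.map_comap_eq_self_of_surjective hf _
  have hlt : K'.comap f < H'.comap f := by
    refine lt_of_le_of_ne (Subgroup.comap_mono hch.2.2.1.le) (fun h => ?_)
    exact hch.2.2.1.ne (by rw [← hmapK, ← hmapH, h])
  have hchief : IsChiefFactor (K'.comap f) (H'.comap f) := by
    refine ⟨hKn, hHn, hlt, fun L hL hKL hLH => ?_⟩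
    have hLmap : (L.map f).Normal := hL.map f hf
    have := hch.2.2.2 (L.map f) hLmap
      (by rw [← hmapK]; exact Subgroup.map_mono hKL)
      (by rw [← hmapH]; exact Subgroup.map_mono hLH)
    have hLc : L = (L.map f).comap f :=
      (Subgroup.comap_map_eq_self (le_trans hkerK hKL)).symm
    rcases this with h | h
    · left; rw [hLc, h]
    · right; rw [hLc, h]
  obtain ⟨g, rfl⟩ := hf g'
  obtain ⟨h, hh, hc⟩ := hG _ _ hchief g
  refine ⟨f h, hh, fun x' hx' => ?_⟩
  obtain ⟨x, rfl⟩ := hf x'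
  have hx : x ∈ H'.comap f := hx'
  have := hc x hx
  simp only [Subgroup.mem_comap] at this
  simpa using this

theorem IsQuasinilpotent.of_mulEquiv {G H : Type} [Group G] [Finite G] [Group H]
    [Finite H] (e : G ≃* H) (hG : IsQuasinilpotent G) : IsQuasinilpotent H :=
  hG.of_surjective e.toMonoidHom e.surjective

end QNclosure


section QNin

variable {G : Type} [Group G]

/-- Relative quasinilpotency: every `N`-chief factor of `N` admits inner action
by elements of `N`. -/
def QNin (N : Subgroup G) : Prop :=
  ∀ K H : Subgroup G, K ≤ H → H ≤ N → SgInv N K → SgInv N H → K ≠ H →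
    (∀ L : Subgroup G, SgInv N L → K ≤ L → L ≤ H → L = K ∨ L = H) →
    ∀ n ∈ N, ActsInner K H n

theorem coe_mem_map_subtype_iff {N : Subgroup G} {K' : Subgroup ↥N} {x : ↥N} :
    (x : G) ∈ K'.map N.subtype ↔ x ∈ K' := by
  constructor
  · rintro ⟨y, hy, hxy⟩
    have : y = x := Subtype.ext hxy
    rwa [← this]
  · intro h; exact ⟨x, h, rfl⟩

theorem sgInv_map_subtype_of_normal {N : Subgroup G} {K' : Subgroup ↥N}
    (h : K'.Normal) : SgInv N (K'.map N.subtype) := by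
  rintro n hn _ ⟨x, hx, rfl⟩
  exact ⟨⟨n, hn⟩ * x * ⟨n, hn⟩⁻¹, h.conj_mem x hx ⟨n, hn⟩, rfl⟩

theorem normal_subgroupOf_of_sgInv {N K : Subgroup G} (h : SgInv N K) :
    (K.subgroupOf N).Normal := by
  refine ⟨fun k hk n => ?_⟩
  rw [Subgroup.mem_subgroupOf] at hk ⊢
  exact h n n.2 k hk

theorem subgroupOf_map_subtype_of_le {N K : Subgroup G} (hle : K ≤ N) :
    (K.subgroupOf N).map N.subtype = K := by
  rw [Subgroup.subgroupOf_map_subtype, inf_eq_left.mpr hle]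

theorem map_subtype_subgroupOf {N : Subgroup G} (K' : Subgroup ↥N) :
    (K'.map N.subtype).subgroupOf N = K' :=
  Subgroup.comap_map_eq_self_of_injective N.subtype_injective K'

/-- If `N` is relatively quasinilpotent in `G`, then `N` is quasinilpotent. -/
theorem isQuasinilpotent_of_qNin {N : Subgroup G} [Finite G] (hq : QNin N) :
    IsQuasinilpotent ↥N := by
  intro K' H' hch n
  set K := K'.map N.subtype with hK
  set H := H'.map N.subtype with hHdef
  have hKH : K ≤ H := Subgroup.map_mono hch.2.2.1.le
  have hHN : H ≤ N := Subgroup.map_subtype_le H'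
  have hKinv : SgInv N K := sgInv_map_subtype_of_normal hch.1
  have hHinv : SgInv N H := sgInv_map_subtype_of_normal hch.2.1
  have hne : K ≠ H := by
    intro h
    refine hch.2.2.1.ne ?_
    rw [← map_subtype_subgroupOf K', ← map_subtype_subgroupOf H', ← hK, ← hHdef, h]
  have hmin : ∀ L : Subgroup G, SgInv N L → K ≤ L → L ≤ H → L = K ∨ L = H := by
    intro L hLinv hKL hLH
    have hLN : L ≤ N := le_trans hLH hHN
    have := hch.2.2.2 (L.subgroupOf N) (normal_subgroupOf_of_sgInv hLinv)
      (by rw [← map_subtype_subgroupOf K']; exact Subgroup.comap_mono hKL)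
      (by rw [← map_subtype_subgroupOf H']; exact Subgroup.comap_mono hLH)
    rcases this with h | h
    · left; rw [← subgroupOf_map_subtype_of_le hLN, h, hK]
    · right; rw [← subgroupOf_map_subtype_of_le hLN, h, hHdef]
  obtain ⟨h, hh, hc⟩ := hq K H hKH hHN hKinv hHinv hne hmin (n : G) n.2
  obtain ⟨h', hh', rfl⟩ := hh
  refine ⟨h', hh', fun x' hx' => ?_⟩
  have hx : (x' : G) ∈ H := coe_mem_map_subtype_iff.mpr hx'
  have := hc (x' : G) hx
  rw [← coe_mem_map_subtype_iff (K' := K')]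
  push_cast
  exact this

/-- Conversely, quasinilpotency of `N` gives relative quasinilpotency. -/
theorem qNin_of_isQuasinilpotent {N : Subgroup G} [Finite G]
    (hq : IsQuasinilpotent ↥N) : QNin N := by
  intro K H hKH hHN hKinv hHinv hne hmin n hn
  have hKN : K ≤ N := le_trans hKH hHN
  have hch : IsChiefFactor (K.subgroupOf N) (H.subgroupOf N) := by
    refine ⟨normal_subgroupOf_of_sgInv hKinv, normal_subgroupOf_of_sgInv hHinv,
      lt_of_le_of_ne (Subgroup.comap_mono hKH) ?_, ?_⟩
    · intro h
      refine hne ?_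
      rw [← subgroupOf_map_subtype_of_le hKN, h, subgroupOf_map_subtype_of_le hHN]
    · intro L' hL' hKL' hLH'
      have hLinv : SgInv N (L'.map N.subtype) := sgInv_map_subtype_of_normal hL'
      have := hmin (L'.map N.subtype) hLinv
        (by rw [← subgroupOf_map_subtype_of_le hKN]; exact Subgroup.map_mono hKL')
        (by rw [← subgroupOf_map_subtype_of_le hHN]; exact Subgroup.map_mono hLH')
      rcases this with h | h
      · left; rw [← map_subtype_subgroupOf L', h]
      · right; rw [← map_subtype_subgroupOf L', h]
  obtain ⟨h', hh', hc⟩ := hq _ _ hch ⟨n, hn⟩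
  rw [Subgroup.mem_subgroupOf] at hh'
  refine ⟨(h' : G), hh', fun x hx => ?_⟩
  have hxN : x ∈ N := hHN hx
  have hx' : (⟨x, hxN⟩ : ↥N) ∈ H.subgroupOf N := by rwa [Subgroup.mem_subgroupOf]
  have := hc ⟨x, hxN⟩ hx'
  rw [Subgroup.mem_subgroupOf] at this
  push_cast at this
  exact this

end QNin


section Socle

variable {G : Type} [Group G] [Finite G]

theorem card_lt_card_of_lt {X X' : Subgroup G} (h : X < X') :
    Nat.card ↥X < Nat.card ↥X' := by
  have hss : (X : Set G) ⊂ (X' : Set G) :=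
    ⟨SetLike.coe_subset_coe.mpr h.le, fun hc => h.not_ge (SetLike.coe_subset_coe.mp hc)⟩
  have h1 : Nat.card ↥X = (X : Set G).ncard := Nat.card_coe_set_eq _
  have h2 : Nat.card ↥X' = (X' : Set G).ncard := Nat.card_coe_set_eq _
  rw [h1, h2]
  exact Set.ncard_lt_ncard hss (Set.toFinite _)

/-- Existence of minimal `A`-invariant subgroups over `W` inside `U`. -/
theorem exists_minimal_sgInv {A W U : Subgroup G} (hU : SgInv A U) (hWU : W < U) :
    ∃ B : Subgroup G, SgInv A B ∧ W < B ∧ B ≤ U ∧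
      ∀ B', SgInv A B' → W ≤ B' → B' ≤ B → B' = W ∨ B' = B := by
  classical
  set s : Set (Subgroup G) := {B | SgInv A B ∧ W < B ∧ B ≤ U} with hs
  have hsne : s.Nonempty := ⟨U, hU, hWU, le_rfl⟩
  obtain ⟨B, hBs, hBmin⟩ : ∃ B ∈ s, ∀ B' ∈ s, B' ≤ B → B = B' := by
    obtain ⟨B, hB⟩ := (Set.toFinite s).exists_minimal hsne
    exact ⟨B, hB.1, fun B' hB' hle => le_antisymm (hB.2 hB' hle) hle⟩
  refine ⟨B, hBs.1, hBs.2.1, hBs.2.2, fun B' hB' hWB' hB'B => ?_⟩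
  rcases eq_or_lt_of_le hWB' with h | h
  · exact Or.inl h.symm
  · exact Or.inr ((hBmin B' ⟨hB', h, le_trans hB'B hBs.2.2⟩ hB'B).symm)

/-- Climbing lemma: if every proper invariant intermediate subgroup misses some minimal
invariant subgroup, then any `a ∈ A` acts on `U/W` as conjugation by an element of `U`. -/
theorem socle_acts_inner {A : Subgroup G} (hQ : QNin A) {W U : Subgroup G}
    (hWU : W ≤ U) (hUA : U ≤ A) (hW : SgInv A W) (hU : SgInv A U)
    (hfull : ∀ X : Subgroup G, SgInv A X → W ≤ X → X ≤ U → X ≠ U →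
      ∃ B : Subgroup G, SgInv A B ∧ W < B ∧ B ≤ U ∧
        (∀ B', SgInv A B' → W ≤ B' → B' ≤ B → B' = W ∨ B' = B) ∧ ¬ B ≤ X)
    {a : G} (ha : a ∈ A) :
    ∃ u ∈ U, ∀ x ∈ U, a * x * a⁻¹ * (u * x * u⁻¹)⁻¹ ∈ W := by
  have wsymm : ∀ {x y : G}, x * y⁻¹ ∈ W → y * x⁻¹ ∈ W := by
    intro x y h
    have e : y * x⁻¹ = (x * y⁻¹)⁻¹ := by group
    rw [e]; exact W.inv_mem h
  have wtrans : ∀ {x y z : G}, x * y⁻¹ ∈ W → y * z⁻¹ ∈ W → x * z⁻¹ ∈ W := by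
    intro x y z h1 h2
    have e : x * z⁻¹ = (x * y⁻¹) * (y * z⁻¹) := by group
    rw [e]; exact W.mul_mem h1 h2
  have wmul : ∀ {x₁ y₁ x₂ y₂ : G}, x₁ ∈ A → x₁ * y₁⁻¹ ∈ W → x₂ * y₂⁻¹ ∈ W →
      (x₁ * x₂) * (y₁ * y₂)⁻¹ ∈ W := by
    intro x₁ y₁ x₂ y₂ hx₁ h1 h2
    have e : (x₁ * x₂) * (y₁ * y₂)⁻¹ = (x₁ * (x₂ * y₂⁻¹) * x₁⁻¹) * (x₁ * y₁⁻¹) := by group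
    rw [e]; exact W.mul_mem (hW x₁ hx₁ _ h2) h1
  have wconj : ∀ {x y g : G}, g ∈ A → x * y⁻¹ ∈ W →
      (g * x * g⁻¹) * (g * y * g⁻¹)⁻¹ ∈ W := by
    intro x y g hg h
    have e : (g * x * g⁻¹) * (g * y * g⁻¹)⁻¹ = g * (x * y⁻¹) * g⁻¹ := by group
    rw [e]; exact hW g hg _ h
  have main : ∀ k : ℕ, ∀ X : Subgroup G, SgInv A X → W ≤ X → X ≤ U →
      (∃ u ∈ X, ∀ x ∈ X, a * x * a⁻¹ * (u * x * u⁻¹)⁻¹ ∈ W) →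
      Nat.card ↥U ≤ Nat.card ↥X + k →
      ∃ u ∈ U, ∀ x ∈ U, a * x * a⁻¹ * (u * x * u⁻¹)⁻¹ ∈ W := by
    intro k
    induction k with
    | zero =>
      intro X hXinv hWX hXU hwit hcard
      rcases eq_or_lt_of_le hXU with h | h
      · subst h
        obtain ⟨u, hu, hc⟩ := hwit
        exact ⟨u, hu, hc⟩
      · exact absurd hcard (by simpa using (card_lt_card_of_lt h).not_ge)
    | succ k ih =>
      intro X hXinv hWX hXU hwit hcard
      rcases eq_or_lt_of_le hXU with h | h
      · subst h
        obtain ⟨u, hu, hc⟩ := hwit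
        exact ⟨u, hu, hc⟩
      · obtain ⟨B, hBinv, hWB, hBU, hBmin, hBX⟩ := hfull X hXinv hWX hXU h.ne
        obtain ⟨u, hu, hcu⟩ := hwit
        have hXA : X ≤ A := le_trans hXU hUA
        have hBA : B ≤ A := le_trans hBU hUA
        have huA : u ∈ A := hXA hu
        obtain ⟨b, hb, hcb⟩ := hQ W B hWB.le hBA hW hBinv hWB.ne
          (fun L hL hWL hLB => hBmin L hL hWL hLB) a ha
        have hbA : b ∈ A := hBA hb
        have hBXW : B ⊓ X = W := by
          rcases hBmin (B ⊓ X) (hBinv.inf hXinv) (le_inf hWB.le hWX) inf_le_left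
            with h' | h'
          · exact h'
          · exact absurd (h' ▸ inf_le_right : B ≤ X) hBX
        have hcommBX : ∀ s ∈ B, ∀ t ∈ X, s * t * s⁻¹ * t⁻¹ ∈ W := by
          intro s hs t ht
          have h1 : s * t * s⁻¹ * t⁻¹ ∈ X :=
            X.mul_mem (hXinv s (hBA hs) t ht) (X.inv_mem ht)
          have h2 : s * t * s⁻¹ * t⁻¹ ∈ B := by
            have hin : t * s⁻¹ * t⁻¹ ∈ B := hBinv t (hXA ht) s⁻¹ (B.inv_mem hs)
            have := B.mul_mem hs hin
            have e : s * (t * s⁻¹ * t⁻¹) = s * t * s⁻¹ * t⁻¹ := by group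
            rwa [e] at this
          rw [← hBXW]; exact ⟨h2, h1⟩
        have hcommXB : ∀ t ∈ X, ∀ s ∈ B, t * s * t⁻¹ * s⁻¹ ∈ W := by
          intro t ht s hs
          have h1 : t * s * t⁻¹ * s⁻¹ ∈ B :=
            B.mul_mem (hBinv t (hXA ht) s hs) (B.inv_mem hs)
          have h2 : t * s * t⁻¹ * s⁻¹ ∈ X := by
            have hin : s * t⁻¹ * s⁻¹ ∈ X := hXinv s (hBA hs) t⁻¹ (X.inv_mem ht)
            have := X.mul_mem ht hin
            have e : t * (s * t⁻¹ * s⁻¹) = t * s * t⁻¹ * s⁻¹ := by group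
            rwa [e] at this
          rw [← hBXW]; exact ⟨h1, h2⟩
        have hwit' : ∃ u' ∈ X ⊔ B, ∀ x ∈ X ⊔ B,
            a * x * a⁻¹ * (u' * x * u'⁻¹)⁻¹ ∈ W := by
          refine ⟨u * b, (X ⊔ B).mul_mem (le_sup_left (b := B) hu)
            (le_sup_right (a := X) hb), ?_⟩
          intro x hx
          obtain ⟨t, ht, s, hs, rfl⟩ := mem_sup_decomp
            (fun s' hs' t' ht' => hXinv s' (hBA hs') t' ht') hx
          have htA : t ∈ A := hXA ht
          have hsA : s ∈ A := hBA hs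
          have e1 : (a * t * a⁻¹) * (u * t * u⁻¹)⁻¹ ∈ W := hcu t ht
          have e2 : (a * s * a⁻¹) * (b * s * b⁻¹)⁻¹ ∈ W := hcb s hs
          have step1 : (a * (t * s) * a⁻¹) * ((u * t * u⁻¹) * (b * s * b⁻¹))⁻¹ ∈ W := by
            have hmem : a * t * a⁻¹ ∈ A := A.mul_mem (A.mul_mem ha htA) (A.inv_mem ha)
            have := wmul hmem e1 e2
            have e : (a * t * a⁻¹) * (a * s * a⁻¹) = a * (t * s) * a⁻¹ := by group
            rwa [e] at this
          have f1 : (u * (b * t * b⁻¹) * u⁻¹) * (u * t * u⁻¹)⁻¹ ∈ W := by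
            have hbt : (b * t * b⁻¹) * t⁻¹ ∈ W := by
              have := hcommBX b hb t ht
              have e : b * t * b⁻¹ * t⁻¹ = (b * t * b⁻¹) * t⁻¹ := by group
              rwa [e] at this
            exact wconj huA hbt
          have f2 : (u * (b * s * b⁻¹) * u⁻¹) * (b * s * b⁻¹)⁻¹ ∈ W := by
            have hsB' : b * s * b⁻¹ ∈ B := B.mul_mem (B.mul_mem hb hs) (B.inv_mem hb)
            have := hcommXB u hu (b * s * b⁻¹) hsB'
            have e : u * (b * s * b⁻¹) * u⁻¹ * (b * s * b⁻¹)⁻¹ =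
                (u * (b * s * b⁻¹) * u⁻¹) * (b * s * b⁻¹)⁻¹ := by group
            rwa [e] at this
          have step2 : ((u * b) * (t * s) * (u * b)⁻¹) *
              ((u * t * u⁻¹) * (b * s * b⁻¹))⁻¹ ∈ W := by
            have hmem : u * (b * t * b⁻¹) * u⁻¹ ∈ A :=
              A.mul_mem (A.mul_mem huA (A.mul_mem (A.mul_mem hbA htA)
                (A.inv_mem hbA))) (A.inv_mem huA)
            have := wmul hmem f1 f2
            have e : (u * (b * t * b⁻¹) * u⁻¹) * (u * (b * s * b⁻¹) * u⁻¹) =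
                (u * b) * (t * s) * (u * b)⁻¹ := by group
            rwa [e] at this
          exact wtrans step1 (wsymm step2)
        refine ih (X ⊔ B) (hXinv.sup hBinv) (le_trans hWX le_sup_left)
          (sup_le hXU hBU) hwit' ?_
        have hlt2 : X < X ⊔ B :=
          lt_of_le_of_ne le_sup_left (fun h' => hBX (h' ▸ le_sup_right))
        have := card_lt_card_of_lt hlt2
        omega
  refine main (Nat.card ↥U) W hW le_rfl hWU ⟨1, W.one_mem, fun x hx => ?_⟩
    (Nat.le_add_left _ _)
  have e : a * x * a⁻¹ * (1 * x * 1⁻¹)⁻¹ = (a * x * a⁻¹) * x⁻¹ := by group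
  rw [e]; exact W.mul_mem (hW a ha x hx) (W.inv_mem hx)

end Socle


section ConjAPI

variable {G : Type} [Group G]

/-- Conjugate of a subgroup. -/
def cj (g : G) (B : Subgroup G) : Subgroup G := B.map (MulAut.conj g).toMonoidHom

theorem mem_cj {g x : G} {B : Subgroup G} : x ∈ cj g B ↔ g⁻¹ * x * g ∈ B := by
  constructor
  · rintro ⟨b, hb, rfl⟩
    simpa [mul_assoc] using hb
  · intro h
    exact ⟨g⁻¹ * x * g, h, by simp [mul_assoc]⟩

theorem cj_cj_inv (g : G) (B : Subgroup G) : cj g (cj g⁻¹ B) = B := by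
  ext x
  simp only [mem_cj]
  constructor
  · intro h; simpa [mul_assoc] using h
  · intro h; simpa [mul_assoc] using h

theorem cj_inv_cj (g : G) (B : Subgroup G) : cj g⁻¹ (cj g B) = B := by
  have := cj_cj_inv g⁻¹ B
  rwa [inv_inv] at this

theorem cj_mono {g : G} {B B' : Subgroup G} (h : B ≤ B') : cj g B ≤ cj g B' :=
  Subgroup.map_mono h

theorem cj_lt_cj {g : G} {B B' : Subgroup G} (h : B < B') : cj g B < cj g B' := by
  refine lt_of_le_of_ne (cj_mono h.le) (fun e => h.ne ?_)
  rw [← cj_inv_cj g B, e, cj_inv_cj]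

theorem cj_eq_of_normal {g : G} {B : Subgroup G} (h : B.Normal) : cj g B = B := by
  ext x
  rw [mem_cj]
  constructor
  · intro hx
    have := h.conj_mem _ hx g
    simpa [mul_assoc] using this
  · intro hx
    have := h.conj_mem _ hx g⁻¹
    simpa [mul_assoc] using this

theorem cj_sup {g : G} {B B' : Subgroup G} : cj g (B ⊔ B') = cj g B ⊔ cj g B' :=
  Subgroup.map_sup _ _ _

theorem cj_sSup {g : G} {s : Set (Subgroup G)} : cj g (sSup s) = sSup (cj g '' s) := by
  rw [sSup_image]
  exact (Subgroup.gc_map_comap (MulAut.conj g).toMonoidHom).l_sSup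

theorem normal_of_cj (B : Subgroup G) (h : ∀ g : G, cj g B ≤ B) : B.Normal := by
  refine ⟨fun b hb g => ?_⟩
  exact h g ⟨b, hb, rfl⟩

theorem normal_sup {B B' : Subgroup G} (hB : B.Normal) (hB' : B'.Normal) :
    (B ⊔ B').Normal := by
  refine normal_of_cj _ (fun g => ?_)
  rw [cj_sup, cj_eq_of_normal hB, cj_eq_of_normal hB']

end ConjAPI

section JoinQN

variable {G : Type} [Group G] [Finite G]

/-- Elements of a normal quasinilpotent subgroup act by inner automorphisms on
every chief factor of `G`. -/
theorem actsInner_of_normal_qn {M : Subgroup G} (hMn : M.Normal)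
    (hq : IsQuasinilpotent ↥M) {K H : Subgroup G} (hch : IsChiefFactor K H) :
    ∀ m ∈ M, ActsInner K H m := by
  classical
  have hQ : QNin M := qNin_of_isQuasinilpotent hq
  have hKn := hch.1
  have hHn := hch.2.1
  set W : Subgroup G := K ⊓ M with hWdef
  set U : Subgroup G := H ⊓ M with hUdef
  have hWn : W.Normal := normal_inf hKn hMn
  have hUn : U.Normal := normal_inf hHn hMn
  have hWU : W ≤ U := inf_le_inf_right _ hch.2.2.1.le
  have hUM : U ≤ M := inf_le_right
  have hUH : U ≤ H := inf_le_left
  by_cases hUK : U ≤ K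
  · intro m hm
    refine ActsInner.of_centralizes (fun x hx => ?_)
    have h1 : m * x * m⁻¹ * x⁻¹ ∈ H :=
      H.mul_mem (hHn.conj_mem x hx m) (H.inv_mem hx)
    have h2 : m * x * m⁻¹ * x⁻¹ ∈ M := by
      have hin : x * m⁻¹ * x⁻¹ ∈ M := hMn.conj_mem m⁻¹ (M.inv_mem hm) x
      have := M.mul_mem hm hin
      have e : m * (x * m⁻¹ * x⁻¹) = m * x * m⁻¹ * x⁻¹ := by group
      rwa [e] at this
    exact hUK ⟨h1, h2⟩
  · intro m hm
    have hWUlt : W < U := by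
      refine lt_of_le_of_ne hWU (fun h => ?_)
      exact hUK (fun x hx => (h ▸ hx : x ∈ W).1)
    set 𝓑 : Set (Subgroup G) := {B | SgInv M B ∧ W < B ∧ B ≤ U ∧
      ∀ B', SgInv M B' → W ≤ B' → B' ≤ B → B' = W ∨ B' = B} with h𝓑
    have hcjInv : ∀ (g : G) (B : Subgroup G), SgInv M B → SgInv M (cj g B) := by
      intro g B hB n hn x hx
      rw [mem_cj] at hx ⊢
      have hn' : g⁻¹ * n * g ∈ M := by
        have := hMn.conj_mem n hn g⁻¹
        simpa [mul_assoc] using this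
      have := hB _ hn' _ hx
      have e : (g⁻¹ * n * g) * (g⁻¹ * x * g) * (g⁻¹ * n * g)⁻¹ =
          g⁻¹ * (n * x * n⁻¹) * g := by group
      rwa [e] at this
    have hcj𝓑 : ∀ (g : G), ∀ B ∈ 𝓑, cj g B ∈ 𝓑 := by
      intro g B hB
      obtain ⟨hB1, hB2, hB3, hB4⟩ := hB
      refine ⟨hcjInv g B hB1, ?_, ?_, ?_⟩
      · have h := cj_lt_cj (g := g) hB2
        rwa [cj_eq_of_normal hWn] at h
      · have h := cj_mono (g := g) hB3
        rwa [cj_eq_of_normal hUn] at h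
      · intro B' hB' hWB' hB'B
        have h1 : cj g⁻¹ B' ≤ B := by
          have := cj_mono (g := g⁻¹) hB'B
          rwa [cj_inv_cj] at this
        have h2 : W ≤ cj g⁻¹ B' := by
          have := cj_mono (g := g⁻¹) hWB'
          rwa [cj_eq_of_normal hWn] at this
        rcases hB4 _ (hcjInv g⁻¹ B' hB') h2 h1 with h | h
        · left
          have e : cj g (cj g⁻¹ B') = cj g W := by rw [h]
          rwa [cj_cj_inv, cj_eq_of_normal hWn] at e
        · right
          have e : cj g (cj g⁻¹ B') = cj g B := by rw [h]
          rwa [cj_cj_inv] at e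
    obtain ⟨B₀, hB₀inv, hB₀W, hB₀U, hB₀min⟩ :=
      exists_minimal_sgInv (SgInv.of_normal hUn) hWUlt
    have hB₀ : B₀ ∈ 𝓑 := ⟨hB₀inv, hB₀W, hB₀U, hB₀min⟩
    set S : Subgroup G := W ⊔ sSup 𝓑 with hSdef
    have hSn : S.Normal := by
      refine normal_of_cj _ (fun g => ?_)
      rw [cj_sup, cj_eq_of_normal hWn, cj_sSup]
      refine sup_le le_sup_left (sSup_le ?_)
      rintro _ ⟨B, hB, rfl⟩
      exact le_trans (le_sSup (hcj𝓑 g B hB)) le_sup_right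
    have hSU : S ≤ U := sup_le hWU (sSup_le (fun B hB => hB.2.2.1))
    have hWS : W ≤ S := le_sup_left
    have hKS : K ⊔ S = H := by
      rcases hch.2.2.2 (K ⊔ S) (normal_sup hKn hSn) le_sup_left
        (sup_le hch.2.2.1.le (le_trans hSU hUH)) with h | h
      · exfalso
        have hSK : S ≤ K := h ▸ le_sup_right
        exact hB₀W.not_ge (le_inf
          (le_trans (le_trans (le_sSup hB₀) le_sup_right) hSK)
          (le_trans hB₀U hUM))
      · exact h
    have hSU' : S = U := by
      refine le_antisymm hSU (fun x hx => ?_)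
      have hxH : x ∈ K ⊔ S := hKS ▸ hUH hx
      obtain ⟨k, hk, s, hs, rfl⟩ := mem_sup_decomp
        (fun s hs k hk => hKn.conj_mem k hk s) hxH
      have hkU : k ∈ U := by
        have hsU : s ∈ U := hSU hs
        have : k = (k * s) * s⁻¹ := by group
        rw [this]
        exact U.mul_mem hx (U.inv_mem hsU)
      have hkW : k ∈ W := ⟨hk, (hUM hkU : k ∈ M)⟩
      exact S.mul_mem (hWS hkW) hs
    have hfull : ∀ X : Subgroup G, SgInv M X → W ≤ X → X ≤ U → X ≠ U →
        ∃ B : Subgroup G, SgInv M B ∧ W < B ∧ B ≤ U ∧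
          (∀ B', SgInv M B' → W ≤ B' → B' ≤ B → B' = W ∨ B' = B) ∧ ¬ B ≤ X := by
      intro X hXinv hWX hXU hXne
      by_contra hcon
      push_neg at hcon
      have hS : S ≤ X := by
        refine sup_le hWX (sSup_le (fun B hB => ?_))
        exact hcon B hB.1 hB.2.1 hB.2.2.1 hB.2.2.2
      exact hXne (le_antisymm hXU (hSU' ▸ hS))
    obtain ⟨u, hu, hcu⟩ := socle_acts_inner hQ hWU hUM
      (SgInv.of_normal hWn) (SgInv.of_normal hUn) hfull hm
    refine ⟨u, hUH hu, fun x hx => ?_⟩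
    have hxKU : x ∈ K ⊔ U := by rw [← hSU', hKS]; exact hx
    obtain ⟨k, hk, y, hy, rfl⟩ := mem_sup_decomp
      (fun s hs k hk => hKn.conj_mem k hk s) hxKU
    have hcW : m * y * m⁻¹ * (u * y * u⁻¹)⁻¹ ∈ W := hcu y hy
    have hc : m * y * m⁻¹ * (u * y * u⁻¹)⁻¹ ∈ K := hcW.1
    have e : m * (k * y) * m⁻¹ * (u * (k * y) * u⁻¹)⁻¹ =
        (m * k * m⁻¹) * (m * y * m⁻¹ * (u * y * u⁻¹)⁻¹) * (u * k * u⁻¹)⁻¹ := by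
      group
    rw [e]
    exact K.mul_mem (K.mul_mem (hKn.conj_mem k hk m) hc)
      (K.inv_mem (hKn.conj_mem k hk u))

/-- A join of two normal quasinilpotent subgroups is quasinilpotent. -/
theorem isQuasinilpotent_join {M N : Subgroup G} (hMn : M.Normal) (hNn : N.Normal)
    (hM : IsQuasinilpotent ↥M) (hN : IsQuasinilpotent ↥N) (hsup : M ⊔ N = ⊤) :
    IsQuasinilpotent G := by
  intro K H hch g
  have hg : g ∈ M ⊔ N := hsup ▸ Subgroup.mem_top g
  obtain ⟨m, hm, n, hn, rfl⟩ := mem_sup_decomp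
    (fun b hb x hx => hMn.conj_mem x hx b) hg
  exact (actsInner_of_normal_qn hMn hM hch m hm).mul hch.1
    (actsInner_of_normal_qn hNn hN hch n hn)

end JoinQN


section NormalQN

theorem cj_eq_of_sgInv {G : Type} [Group G] {A X : Subgroup G} (h : SgInv A X)
    {a : G} (ha : a ∈ A) : cj a X = X := conjMap_eq_of_sgInv h ha

theorem mk'_eq_imp {G : Type} [Group G] {A : Subgroup G} [A.Normal] {h k : G}
    (he : QuotientGroup.mk' A h = QuotientGroup.mk' A k) : h * k⁻¹ ∈ A := by
  have : QuotientGroup.mk' A (h * k⁻¹) = 1 := by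
    rw [map_mul, map_inv, he]
    simp
  rw [← QuotientGroup.ker_mk' A]
  exact MonoidHom.mem_ker.mpr this

theorem qNin_of_normal_aux : ∀ (k : ℕ) (G : Type) [Group G] [Finite G],
    Nat.card G ≤ k → IsQuasinilpotent G → ∀ N : Subgroup G, N.Normal → QNin N := by
  intro k
  induction k with
  | zero =>
    intro G _ _ hcard
    have : 0 < Nat.card G := Nat.card_pos
    omega
  | succ k IH =>
    intro G _ _ hcard hqn N hNn K H hKH hHN hKinv hHinv hne hmin n hn
    rcases subsingleton_or_nontrivial G with hss | hnt
    · exfalso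
      refine hne (Subgroup.ext fun x => ?_)
      have : x = 1 := Subsingleton.elim _ _
      simp [this, K.one_mem, H.one_mem]
    -- pick a minimal normal subgroup A of G
    have hbt : (⊥ : Subgroup G) < ⊤ := by
      obtain ⟨x, hx⟩ := exists_ne (1 : G)
      refine lt_of_le_of_ne bot_le (fun h => hx ?_)
      have : x ∈ (⊥ : Subgroup G) := h ▸ Subgroup.mem_top x
      simpa using this
    obtain ⟨A, hAinv, hAbot, -, hAmin⟩ :=
      exists_minimal_sgInv (A := (⊤ : Subgroup G)) (W := ⊥) (U := ⊤)
        (fun n _ x _ => Subgroup.mem_top _) hbt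
    have hA : A.Normal := sgInv_top_iff.mp hAinv
    by_cases hcase : A ⊓ H ≤ K
    -- Case I: the minimal normal subgroup meets H inside K; pass to G/A
    · letI := hA
      set π := QuotientGroup.mk' A with hπ
      have hπs : Function.Surjective π := QuotientGroup.mk'_surjective A
      have hcard' : Nat.card (G ⧸ A) ≤ k := by
        have h1 : Nat.card G = Nat.card (G ⧸ A) * Nat.card ↥A :=
          Subgroup.card_eq_card_quotient_mul_card_subgroup A
        have h2 : 1 < Nat.card ↥A := by
          obtain ⟨x, hx, hx'⟩ := SetLike.exists_of_lt hAbot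
          have : Nontrivial ↥A := ⟨⟨⟨x, hx⟩, 1, fun hcon => hx' (by
            simpa using congrArg Subtype.val hcon)⟩⟩
          exact Finite.one_lt_card
        have h3 : 0 < Nat.card (G ⧸ A) := Nat.card_pos
        nlinarith
      have hqn' : IsQuasinilpotent (G ⧸ A) := hqn.of_surjective π hπs
      have hKAH : (A ⊔ K) ⊓ H ≤ K := by
        rintro x ⟨hxAK, hxH⟩
        obtain ⟨a, ha, kk, hkk, rfl⟩ := mem_sup_decomp
          (fun b hb a ha => hA.conj_mem a ha b) hxAK
        have haH : a ∈ H := by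
          have : a = (a * kk) * kk⁻¹ := by group
          rw [this]
          exact H.mul_mem hxH (H.inv_mem (hKH hkk))
        exact K.mul_mem (hcase ⟨ha, haH⟩) hkk
      have hQN' : QNin (N.map π) := IH (G ⧸ A) hcard' hqn' (N.map π) (hNn.map π hπs)
      -- transfer the chief factor data
      have hKH' : K.map π ≤ H.map π := Subgroup.map_mono hKH
      have hHN' : H.map π ≤ N.map π := Subgroup.map_mono hHN
      have hKinv' : SgInv (N.map π) (K.map π) := by
        rintro _ ⟨n₀, hn₀, rfl⟩ _ ⟨k₀, hk₀, rfl⟩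
        exact ⟨n₀ * k₀ * n₀⁻¹, hKinv n₀ hn₀ k₀ hk₀, by simp⟩
      have hHinv' : SgInv (N.map π) (H.map π) := by
        rintro _ ⟨n₀, hn₀, rfl⟩ _ ⟨k₀, hk₀, rfl⟩
        exact ⟨n₀ * k₀ * n₀⁻¹, hHinv n₀ hn₀ k₀ hk₀, by simp⟩
      have hne' : K.map π ≠ H.map π := by
        intro hEq
        refine hne (le_antisymm hKH (fun h₀ hh₀ => ?_))
        have : π h₀ ∈ K.map π := hEq ▸ ⟨h₀, hh₀, rfl⟩
        obtain ⟨k₀, hk₀, hk₀e⟩ := this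
        have : h₀ * k₀⁻¹ ∈ A := mk'_eq_imp (by rw [hk₀e])
        have hmem : h₀ ∈ (A ⊔ K) ⊓ H := by
          constructor
          · have : (h₀ * k₀⁻¹) * k₀ ∈ A ⊔ K :=
              Subgroup.mul_mem _ (le_sup_left (b := K) this) (le_sup_right (a := A) hk₀)
            simpa using this
          · exact hh₀
        exact hKAH hmem
      have hmin' : ∀ L', SgInv (N.map π) L' → K.map π ≤ L' → L' ≤ H.map π →
          L' = K.map π ∨ L' = H.map π := by
        intro L' hL' hKL' hL'H
        set L : Subgroup G := L'.comap π ⊓ H with hLdef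
        have hLinv : SgInv N L := by
          intro n₀ hn₀ x hx
          refine ⟨?_, hHinv n₀ hn₀ x hx.2⟩
          have : π n₀ * π x * (π n₀)⁻¹ ∈ L' := hL' (π n₀) ⟨n₀, hn₀, rfl⟩ (π x) hx.1
          simpa [Subgroup.mem_comap] using this
        have hKL : K ≤ L := le_inf (fun x hx => by
          have : π x ∈ L' := hKL' ⟨x, hx, rfl⟩
          simpa [Subgroup.mem_comap] using this) hKH
        have hLmap : L.map π = L' := by
          refine le_antisymm ?_ ?_
          · rintro _ ⟨x, hx, rfl⟩
            exact hx.1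
          · intro l hl
            obtain ⟨h₀, hh₀, rfl⟩ := hL'H hl
            exact ⟨h₀, ⟨hl, hh₀⟩, rfl⟩
        rcases hmin L hLinv hKL inf_le_right with h | h
        · left; rw [← hLmap, h]
        · right; rw [← hLmap, h]
      obtain ⟨hbar, hhbar, hcbar⟩ := hQN' (K.map π) (H.map π) hKH' hHN' hKinv' hHinv' hne'
        hmin' (π n) ⟨n, hn, rfl⟩
      obtain ⟨h₀, hh₀, rfl⟩ := hhbar
      refine ⟨h₀, hh₀, fun x hx => ?_⟩
      have hz : π (n * x * n⁻¹ * (h₀ * x * h₀⁻¹)⁻¹) ∈ K.map π := by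
        have := hcbar (π x) ⟨x, hx, rfl⟩
        simpa using this
      have hzH : n * x * n⁻¹ * (h₀ * x * h₀⁻¹)⁻¹ ∈ H := by
        refine H.mul_mem (hHinv n hn x hx) (H.inv_mem ?_)
        exact H.mul_mem (H.mul_mem hh₀ hx) (H.inv_mem hh₀)
      have hzAK : n * x * n⁻¹ * (h₀ * x * h₀⁻¹)⁻¹ ∈ A ⊔ K := by
        have : n * x * n⁻¹ * (h₀ * x * h₀⁻¹)⁻¹ ∈ (K.map π).comap π := hz
        rw [Subgroup.comap_map_eq, QuotientGroup.ker_mk'] at this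
        rwa [sup_comm] at this
      exact hKAH ⟨hzAK, hzH⟩
    -- Case II: A ⊓ H is not contained in K
    · have hAN : A ≤ N := by
        rcases hAmin (A ⊓ N) (fun g _ x hx =>
            ⟨hA.conj_mem x hx.1 g, hNn.conj_mem x hx.2 g⟩)
          bot_le inf_le_left with h | h
        · exfalso
          refine hcase (fun x hx => ?_)
          have : x ∈ A ⊓ N := ⟨hx.1, hHN hx.2⟩
          rw [h] at this
          have hx1 : x = 1 := by simpa using this
          rw [hx1]; exact K.one_mem
        · exact le_of_inf_eq h
      have hAHinv : SgInv N (A ⊓ H) := fun n₀ hn₀ x hx =>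
        ⟨hA.conj_mem x hx.1 n₀, hHinv n₀ hn₀ x hx.2⟩
      have hHdecomp : K ⊔ (A ⊓ H) = H := by
        rcases hmin (K ⊔ (A ⊓ H)) (hKinv.sup hAHinv) le_sup_left
          (sup_le hKH inf_le_right) with h | h
        · exact absurd (le_trans le_sup_right h.le) hcase
        · exact h
      have hchbot : IsChiefFactor (⊥ : Subgroup G) A := by
        refine ⟨inferInstance, hA, hAbot, fun L hL h1 h2 => ?_⟩
        exact hAmin L (sgInv_top_iff.mpr hL) h1 h2
      by_cases hab : ∀ a ∈ A, ∀ b ∈ A, a * b = b * a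
      -- Case II.a : A is abelian, hence central
      · have hcentral : ∀ x ∈ A, ∀ g : G, g * x * g⁻¹ = x := by
          intro x hx g
          obtain ⟨a, ha, hc⟩ := hqn ⊥ A hchbot g
          have h1 : g * x * g⁻¹ * (a * x * a⁻¹)⁻¹ = 1 := by
            simpa [Subgroup.mem_bot] using hc x hx
          have h2 : a * x * a⁻¹ = x := by
            rw [hab a ha x hx]
            group
          rw [h2] at h1
          have : g * x * g⁻¹ = (g * x * g⁻¹ * x⁻¹) * x := by group
          rw [this, h1]
          group
        refine ⟨1, H.one_mem, fun x hx => ?_⟩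
        have hxKU : x ∈ K ⊔ (A ⊓ H) := by rw [hHdecomp]; exact hx
        obtain ⟨kk, hkk, y, hy, rfl⟩ := mem_sup_decomp
          (fun b (hb : b ∈ A ⊓ H) kk hkk => hKinv b (hHN hb.2) kk hkk) hxKU
        have hy' : n * y * n⁻¹ = y := hcentral y hy.1 n
        have e : n * (kk * y) * n⁻¹ * (1 * (kk * y) * 1⁻¹)⁻¹ =
            (n * kk * n⁻¹) * (n * y * n⁻¹) * y⁻¹ * kk⁻¹ := by group
        rw [e, hy']
        have e2 : n * kk * n⁻¹ * y * y⁻¹ * kk⁻¹ = (n * kk * n⁻¹) * kk⁻¹ := by group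
        rw [e2]
        exact K.mul_mem (hKinv n hn kk hkk) (K.inv_mem hkk)
      -- Case II.b : A is nonabelian
      · set C : Subgroup G := Subgroup.centralizer (A : Set G) with hCdef
        have hCmem : ∀ {c : G}, c ∈ C ↔ ∀ a ∈ A, a * c = c * a := by
          intro c
          rw [hCdef, Subgroup.mem_centralizer_iff]
          rfl
        have hCn : C.Normal := by
          refine ⟨fun c hc g => hCmem.mpr (fun a ha => ?_)⟩
          have ha' : g⁻¹ * a * g ∈ A := by
            have := hA.conj_mem a ha g⁻¹
            simpa [mul_assoc] using this
          have hcomm := hCmem.mp hc _ ha'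
          have e : a * (g * c * g⁻¹) = g * ((g⁻¹ * a * g) * c) * g⁻¹ := by group
          rw [e, hcomm]
          group
        have hdec : ∀ g : G, ∃ a ∈ A, a⁻¹ * g ∈ C := by
          intro g
          obtain ⟨a, ha, hc⟩ := hqn ⊥ A hchbot g
          refine ⟨a, ha, hCmem.mpr (fun x hx => ?_)⟩
          have h1 : g * x * g⁻¹ * (a * x * a⁻¹)⁻¹ = 1 := by
            simpa [Subgroup.mem_bot] using hc x hx
          have h2 : g * x * g⁻¹ = a * x * a⁻¹ := by
            have : g * x * g⁻¹ = (g * x * g⁻¹ * (a * x * a⁻¹)⁻¹) * (a * x * a⁻¹) := by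
              group
            rw [this, h1]; group
          have : x * (a⁻¹ * g) = a⁻¹ * (a * x * a⁻¹) * g := by group
          rw [this, ← h2]
          group
        by_cases hCbot : C = ⊥
        -- then G = A is simple-like
        · have hAtop : A = ⊤ := by
            rw [Subgroup.eq_top_iff']
            intro g
            obtain ⟨a, ha, hc⟩ := hdec g
            rw [hCbot, Subgroup.mem_bot] at hc
            have : g = a * (a⁻¹ * g) := by group
            rw [this, hc]
            simpa using ha
          rcases hAmin N (sgInv_top_iff.mpr hNn) bot_le (hAtop ▸ le_top) with h | h
          · exfalso
            have : K = H := le_antisymm hKH (le_trans (le_trans hHN h.le) bot_le)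
            exact hne this
          · have hNtop : N = ⊤ := h.trans hAtop
            have hchKH : IsChiefFactor K H := by
              refine ⟨sgInv_top_iff.mp (hNtop ▸ hKinv), sgInv_top_iff.mp (hNtop ▸ hHinv),
                lt_of_le_of_ne hKH hne, fun L hL h1 h2 => ?_⟩
              exact hmin L (hNtop ▸ sgInv_top_iff.mpr hL) h1 h2
            exact hqn K H hchKH n
        -- main subcase: C ≠ ⊥, G = A * C and A behaves like a direct factor
        · have hQA : QNin A := by
            intro K' H' hKH' hH'A hK'inv hH'inv hne' hmin' a ha
            have hGnorm : ∀ L : Subgroup G, L ≤ A → SgInv A L → L.Normal := by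
              intro L hLA hLinv
              refine ⟨fun x hx g => ?_⟩
              obtain ⟨a', ha', hc'⟩ := hdec g
              have hcx := hCmem.mp hc' x (hLA hx)
              have e : g * x * g⁻¹ = a' * ((a'⁻¹ * g) * x * (a'⁻¹ * g)⁻¹) * a'⁻¹ := by
                group
              have e2 : (a'⁻¹ * g) * x * (a'⁻¹ * g)⁻¹ = x := by
                have : (a'⁻¹ * g) * x * (a'⁻¹ * g)⁻¹ =
                    (x * (a'⁻¹ * g)) * (a'⁻¹ * g)⁻¹ := by rw [← hcx]
                rw [this]; group
              rw [e, e2]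
              exact hLinv a' ha' x hx
            have hchKH' : IsChiefFactor K' H' := by
              refine ⟨hGnorm K' (le_trans hKH' hH'A) hK'inv, hGnorm H' hH'A hH'inv,
                lt_of_le_of_ne hKH' hne', fun L hL h1 h2 => ?_⟩
              exact hmin' L (SgInv.of_normal hL) h1 h2
            exact hqn K' H' hchKH' a
          -- decompose n = a * c
          obtain ⟨a, ha, hcC⟩ := hdec n
          set c : G := a⁻¹ * n with hcdef
          have hcN : c ∈ N := N.mul_mem (N.inv_mem (hAN ha)) hn
          have hn' : n = a * c := by rw [hcdef]; group
          -- the section U/W inside A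
          set W : Subgroup G := A ⊓ K with hWdef
          set U : Subgroup G := A ⊓ H with hUdef
          have hWA : W ≤ A := inf_le_left
          have hUA : U ≤ A := inf_le_left
          have hUH : U ≤ H := inf_le_right
          have hWU : W ≤ U := inf_le_inf_left _ hKH
          have hWinv : SgInv A W := fun a' ha' x hx =>
            ⟨A.mul_mem (A.mul_mem ha' hx.1) (A.inv_mem ha'),
              hKinv a' (hAN ha') x hx.2⟩
          have hUinv : SgInv A U := fun a' ha' x hx =>
            ⟨A.mul_mem (A.mul_mem ha' hx.1) (A.inv_mem ha'),
              hHinv a' (hAN ha') x hx.2⟩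
          have hWltU : W < U := by
            refine lt_of_le_of_ne hWU (fun h => hcase (fun x hx => ?_))
            exact ((h ▸ (hx : x ∈ A ⊓ H)) : x ∈ W).2
          have hKU : K ⊓ U = W := by
            refine le_antisymm (fun x hx => ⟨hx.2.1, hx.1⟩) (fun x hx => ⟨hx.2, hx.1, hWU hx |>.2⟩)
          set 𝓑 : Set (Subgroup G) := {B | SgInv A B ∧ W < B ∧ B ≤ U ∧
            ∀ B', SgInv A B' → W ≤ B' → B' ≤ B → B' = W ∨ B' = B} with h𝓑
          have hcjInvA : ∀ a' ∈ A, ∀ (B : Subgroup G), SgInv A B → SgInv A (cj a' B) := by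
            intro a' ha' B hB g hg x hx
            rw [mem_cj] at hx ⊢
            have hg' : a'⁻¹ * g * a' ∈ A :=
              A.mul_mem (A.mul_mem (A.inv_mem ha') hg) ha'
            have := hB _ hg' _ hx
            have e : (a'⁻¹ * g * a') * (a'⁻¹ * x * a') * (a'⁻¹ * g * a')⁻¹ =
                a'⁻¹ * (g * x * g⁻¹) * a' := by group
            rwa [e] at this
          have hcj𝓑 : ∀ a' ∈ A, ∀ B ∈ 𝓑, cj a' B ∈ 𝓑 := by
            intro a' ha' B hB
            obtain ⟨hB1, hB2, hB3, hB4⟩ := hB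
            refine ⟨hcjInvA a' ha' B hB1, ?_, ?_, ?_⟩
            · have h := cj_lt_cj (g := a') hB2
              rwa [cj_eq_of_sgInv hWinv ha'] at h
            · have h := cj_mono (g := a') hB3
              rwa [cj_eq_of_sgInv hUinv ha'] at h
            · intro B' hB' hWB' hB'B
              have h1 : cj a'⁻¹ B' ≤ B := by
                have := cj_mono (g := a'⁻¹) hB'B
                rwa [cj_inv_cj] at this
              have h2 : W ≤ cj a'⁻¹ B' := by
                have := cj_mono (g := a'⁻¹) hWB'
                rwa [cj_eq_of_sgInv hWinv (A.inv_mem ha')] at this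
              rcases hB4 _ (hcjInvA a'⁻¹ (A.inv_mem ha') B' hB') h2 h1 with h | h
              · left
                have e : cj a' (cj a'⁻¹ B') = cj a' W := by rw [h]
                rwa [cj_cj_inv, cj_eq_of_sgInv hWinv ha'] at e
              · right
                have e : cj a' (cj a'⁻¹ B') = cj a' B := by rw [h]
                rwa [cj_cj_inv] at e
          obtain ⟨B₀, hB₀inv, hB₀W, hB₀U, hB₀min⟩ := exists_minimal_sgInv hUinv hWltU
          have hB₀ : B₀ ∈ 𝓑 := ⟨hB₀inv, hB₀W, hB₀U, hB₀min⟩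
          set S : Subgroup G := W ⊔ sSup 𝓑 with hSdef
          have hSA : S ≤ A := sup_le hWA (sSup_le (fun B hB => le_trans hB.2.2.1 hUA))
          have hSU : S ≤ U := sup_le hWU (sSup_le (fun B hB => hB.2.2.1))
          have hcjS : ∀ a' ∈ A, cj a' S ≤ S := by
            intro a' ha'
            rw [hSdef, cj_sup, cj_eq_of_sgInv hWinv ha', cj_sSup]
            refine sup_le le_sup_left (sSup_le ?_)
            rintro _ ⟨B, hB, rfl⟩
            exact le_trans (le_sSup (hcj𝓑 a' ha' B hB)) le_sup_right
          have hSinv : SgInv N S := by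
            intro n₀ hn₀ x hx
            obtain ⟨a₀, ha₀, hc₀⟩ := hdec n₀
            have hcx := hCmem.mp hc₀ x (hSA hx)
            have e : n₀ * x * n₀⁻¹ = a₀ * ((a₀⁻¹ * n₀) * x * (a₀⁻¹ * n₀)⁻¹) * a₀⁻¹ := by
              group
            have e2 : (a₀⁻¹ * n₀) * x * (a₀⁻¹ * n₀)⁻¹ = x := by
              have : (a₀⁻¹ * n₀) * x * (a₀⁻¹ * n₀)⁻¹ =
                  (x * (a₀⁻¹ * n₀)) * (a₀⁻¹ * n₀)⁻¹ := by rw [← hcx]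
              rw [this]; group
            rw [e, e2]
            exact hcjS a₀ ha₀ ⟨x, hx, rfl⟩
          have hKS : K ⊔ S = H := by
            rcases hmin (K ⊔ S) (hKinv.sup hSinv) le_sup_left
              (sup_le hKH (le_trans hSU hUH)) with h | h
            · exfalso
              have hSK : S ≤ K := h ▸ le_sup_right
              have : B₀ ≤ W := by
                rw [← hKU]
                exact le_inf (le_trans (le_trans (le_sSup hB₀) le_sup_right) hSK) hB₀U
              exact hB₀W.not_ge this
            · exact h
          have hSU' : S = U := by
            refine le_antisymm hSU (fun x hx => ?_)
            have hxH : x ∈ K ⊔ S := hKS ▸ hUH hx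
            obtain ⟨kk, hkk, s, hs, rfl⟩ := mem_sup_decomp
              (fun s hs kk hkk => hKinv s (hHN (hUH (hSU hs))) kk hkk) hxH
            have hkU : kk ∈ U := by
              have hsU : s ∈ U := hSU hs
              have e : kk = (kk * s) * s⁻¹ := by group
              rw [e]
              exact U.mul_mem hx (U.inv_mem hsU)
            have : kk ∈ W := by rw [← hKU]; exact ⟨hkk, hkU⟩
            exact S.mul_mem (le_sup_left (b := sSup 𝓑) this) hs
          have hfull : ∀ X : Subgroup G, SgInv A X → W ≤ X → X ≤ U → X ≠ U →
              ∃ B : Subgroup G, SgInv A B ∧ W < B ∧ B ≤ U ∧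
                (∀ B', SgInv A B' → W ≤ B' → B' ≤ B → B' = W ∨ B' = B) ∧ ¬ B ≤ X := by
            intro X hXinv hWX hXU hXne
            by_contra hcon
            push_neg at hcon
            have hS : S ≤ X :=
              sup_le hWX (sSup_le (fun B hB => hcon B hB.1 hB.2.1 hB.2.2.1 hB.2.2.2))
            exact hXne (le_antisymm hXU (hSU' ▸ hS))
          obtain ⟨u, hu, hcu⟩ := socle_acts_inner hQA hWU hUA hWinv hUinv hfull ha
          refine ⟨u, hUH hu, fun x hx => ?_⟩
          have hxKU : x ∈ K ⊔ U := by rw [← hSU', hKS]; exact hx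
          obtain ⟨kk, hkk, y, hy, rfl⟩ := mem_sup_decomp
            (fun s hs kk hkk => hKinv s (hHN (hUH hs)) kk hkk) hxKU
          have hycomm := hCmem.mp hcC y (hUA hy)
          have hyconj : n * y * n⁻¹ = a * y * a⁻¹ := by
            have e : n * y * n⁻¹ = a * ((a⁻¹ * n) * y * (a⁻¹ * n)⁻¹) * a⁻¹ := by group
            have e2 : (a⁻¹ * n) * y * (a⁻¹ * n)⁻¹ = y := by
              have : (a⁻¹ * n) * y * (a⁻¹ * n)⁻¹ =
                  (y * (a⁻¹ * n)) * (a⁻¹ * n)⁻¹ := by rw [← hycomm]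
              rw [this]; group
            rw [e, e2]
          have hw : a * y * a⁻¹ * (u * y * u⁻¹)⁻¹ ∈ W := hcu y hy
          have e : n * (kk * y) * n⁻¹ * (u * (kk * y) * u⁻¹)⁻¹ =
              (n * kk * n⁻¹) * ((n * y * n⁻¹) * (u * y * u⁻¹)⁻¹) * (u * kk * u⁻¹)⁻¹ := by
            group
          rw [e, hyconj]
          refine K.mul_mem (K.mul_mem (hKinv n hn kk hkk) hw.2) (K.inv_mem ?_)
          exact hKinv u (hHN (hUH hu)) kk hkk

/-- A normal subgroup of a finite quasinilpotent group is quasinilpotent. -/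
theorem isQuasinilpotent_of_normal {G : Type} [Group G] [Finite G]
    (hqn : IsQuasinilpotent G) {N : Subgroup G} (hNn : N.Normal) :
    IsQuasinilpotent ↥N :=
  isQuasinilpotent_of_qNin (qNin_of_normal_aux (Nat.card G) G le_rfl hqn N hNn)

end NormalQN


section Subnormal

variable {G : Type} [Group G]

theorem conj_mem_of_subgroupOf_normal {X Y : Subgroup G} (hle : X ≤ Y)
    (h : (X.subgroupOf Y).Normal) : SgInv Y X := by
  intro y hy x hx
  have hx' : (⟨x, hle hx⟩ : ↥Y) ∈ X.subgroupOf Y := Subgroup.mem_subgroupOf.mpr hx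
  have := h.conj_mem _ hx' ⟨y, hy⟩
  rw [Subgroup.mem_subgroupOf] at this
  exact this

/-- Descend a property along a subnormal chain. -/
theorem subnormal_descend {P : Subgroup G → Prop} (htop : P ⊤)
    (hstep : ∀ X Y : Subgroup G, X ≤ Y → (X.subgroupOf Y).Normal → P Y → P X)
    {A : Subgroup G} (hs : IsSubnormalIn A) : P A := by
  obtain ⟨nn, c, hc0, hlast, hchain⟩ := hs
  suffices h : ∀ k, k ≤ nn → P (c ⟨nn - k, by omega⟩) by
    have := h nn le_rfl
    have h0 : (⟨nn - nn, by omega⟩ : Fin (nn + 1)) = 0 := Fin.ext (by simp)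
    rwa [h0, hc0] at this
  intro k
  induction k with
  | zero =>
    intro _
    have h0 : (⟨nn - 0, by omega⟩ : Fin (nn + 1)) = Fin.last nn := Fin.ext (by simp)
    rw [h0, hlast]
    exact htop
  | succ k ih =>
    intro hk
    set i : Fin nn := ⟨nn - (k + 1), by omega⟩ with hi
    have h2 : i.succ = (⟨nn - k, by omega⟩ : Fin (nn + 1)) := Fin.ext (by simp [hi]; omega)
    have hYP : P (c i.succ) := by rw [h2]; exact ih (by omega)
    have hstep' := hchain i
    have h1 : i.castSucc = (⟨nn - (k + 1), by omega⟩ : Fin (nn + 1)) := Fin.ext rfl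
    rw [← h1]
    exact hstep _ _ hstep'.1 hstep'.2 hYP

theorem isQuasinilpotent_of_subnormal {G : Type} [Group G] [Finite G]
    (hqn : IsQuasinilpotent G) {A : Subgroup G} (hs : IsSubnormalIn A) :
    IsQuasinilpotent ↥A := by
  refine subnormal_descend (P := fun X => IsQuasinilpotent ↥X)
    (hqn.of_mulEquiv Subgroup.topEquiv.symm) ?_ hs
  intro X Y hle hnorm hY
  have h1 : IsQuasinilpotent ↥(X.subgroupOf Y) := isQuasinilpotent_of_normal hY hnorm
  exact h1.of_mulEquiv (Subgroup.subgroupOfEquivOfLe hle)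

theorem isSubnormalIn_inf {A F : Subgroup G} (hs : IsSubnormalIn A) :
    IsSubnormalIn ((A ⊓ F).subgroupOf F) := by
  obtain ⟨nn, c, hc0, hlast, hchain⟩ := hs
  refine ⟨nn, fun i => ((c i) ⊓ F).subgroupOf F,
    by show ((c 0) ⊓ F).subgroupOf F = _; rw [hc0], ?_, fun i => ?_⟩
  · show ((c (Fin.last nn)) ⊓ F).subgroupOf F = ⊤
    rw [hlast, top_inf_eq, Subgroup.subgroupOf_self]
  constructor
  · exact Subgroup.comap_mono (inf_le_inf_right F (hchain i).1)
  · refine normal_subgroupOf_of_sgInv (fun y hy x hx => ?_)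
    rw [Subgroup.mem_subgroupOf] at hy hx ⊢
    refine ⟨?_, (y * x * y⁻¹).2⟩
    exact conj_mem_of_subgroupOf_normal (hchain i).1 (hchain i).2
      (y : G) hy.1 (x : G) hx.1

theorem isSubnormalIn_map {H : Type} [Group H] (f : G →* H)
    (hf : Function.Surjective f) {A : Subgroup G} (hs : IsSubnormalIn A) :
    IsSubnormalIn (A.map f) := by
  obtain ⟨nn, c, hc0, hlast, hchain⟩ := hs
  refine ⟨nn, fun i => (c i).map f,
    by show (c 0).map f = _; rw [hc0], ?_, fun i => ?_⟩
  · show (c (Fin.last nn)).map f = ⊤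
    rw [hlast]
    exact Subgroup.map_top_of_surjective f hf
  constructor
  · exact Subgroup.map_mono (hchain i).1
  · refine normal_subgroupOf_of_sgInv (fun y hy x hx => ?_)
    obtain ⟨y₀, hy₀, rfl⟩ := hy
    obtain ⟨x₀, hx₀, rfl⟩ := hx
    refine ⟨y₀ * x₀ * y₀⁻¹, ?_, by simp⟩
    exact conj_mem_of_subgroupOf_normal (hchain i).1 (hchain i).2 y₀ hy₀ x₀ hx₀

end Subnormal

section GenFittingLemmas

theorem le_genFitting {G : Type} [Group G] [Finite G] {N : Subgroup G}
    (hN : N.Normal) (hq : IsQuasinilpotent ↥N) : N ≤ genFitting G :=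
  le_sSup ⟨hN, hq⟩

theorem subsingleton_bot_subgroup (G : Type) [Group G] :
    Subsingleton ↥(⊥ : Subgroup G) := by
  refine ⟨fun a b => Subtype.ext ?_⟩
  rw [Subgroup.mem_bot.mp a.2, Subgroup.mem_bot.mp b.2]

/-- The generalized Fitting subgroup is quasinilpotent. -/
theorem genFitting_qn (G : Type) [Group G] [Finite G] :
    IsQuasinilpotent ↥(genFitting G) := by
  classical
  set 𝒮 : Set (Subgroup G) := {N | N.Normal ∧ IsQuasinilpotent ↥N} with h𝒮
  have key : ∀ s : Finset (Subgroup G), (∀ N ∈ s, N.Normal ∧ IsQuasinilpotent ↥N) →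
      (s.sup id).Normal ∧ IsQuasinilpotent ↥(s.sup id) := by
    intro s
    induction s using Finset.induction_on with
    | empty =>
      intro _
      simp only [Finset.sup_empty]
      refine ⟨inferInstance, ?_⟩
      have := subsingleton_bot_subgroup G
      rw [Finset.sup_empty]
      exact isQuasinilpotent_of_subsingleton _
    | insert _ _ hns ih =>
      rename_i N s
      intro hmem
      have hN := hmem N (Finset.mem_insert_self N s)
      have hM := ih (fun M hM => hmem M (Finset.mem_insert_of_mem hM))
      rw [Finset.sup_insert]
      set M : Subgroup G := s.sup id with hMdef
      set P : Subgroup G := id N ⊔ M with hPdef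
      have hNP : N ≤ P := le_sup_left
      have hMP : M ≤ P := le_sup_right
      have hPn : P.Normal := normal_sup hN.1 hM.1
      refine ⟨hPn, ?_⟩
      letI := hN.1
      letI := hM.1
      have hN' : ((N.subgroupOf P)).Normal := Subgroup.normal_subgroupOf
      have hM' : ((M.subgroupOf P)).Normal := Subgroup.normal_subgroupOf
      have hqN' : IsQuasinilpotent ↥(N.subgroupOf P) :=
        hN.2.of_mulEquiv (Subgroup.subgroupOfEquivOfLe hNP).symm
      have hqM' : IsQuasinilpotent ↥(M.subgroupOf P) :=
        hM.2.of_mulEquiv (Subgroup.subgroupOfEquivOfLe hMP).symm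
      have hsup : N.subgroupOf P ⊔ M.subgroupOf P = ⊤ := by
        rw [eq_top_iff]
        intro x _
        have hxP : (x : G) ∈ N ⊔ M := x.2
        obtain ⟨a, ha, b, hb, hab⟩ := mem_sup_decomp
          (fun b hb a ha => hN.1.conj_mem a ha b) hxP
        have haP : a ∈ P := hNP ha
        have hbP : b ∈ P := hMP hb
        have : x = (⟨a, haP⟩ : ↥P) * ⟨b, hbP⟩ := Subtype.ext (by simpa using hab)
        rw [this]
        exact Subgroup.mul_mem _
          (le_sup_left (b := M.subgroupOf P) (Subgroup.mem_subgroupOf.mpr ha))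
          (le_sup_right (a := N.subgroupOf P) (Subgroup.mem_subgroupOf.mpr hb))
      exact isQuasinilpotent_join hN' hM' hqN' hqM' hsup
  have hfin : (𝒮 : Set (Subgroup G)).Finite := Set.toFinite _
  have hsup : genFitting G = hfin.toFinset.sup id := by
    rw [Finset.sup_id_eq_sSup, Set.Finite.coe_toFinset]
    rfl
  have := key hfin.toFinset (fun N hN => (hfin.mem_toFinset.mp hN :))
  rw [hsup]
  exact this.2

theorem genFitting_map_le_of_surjective {G H : Type} [Group G] [Finite G] [Group H]
    [Finite H] (f : G →* H) (hf : Function.Surjective f) :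
    (genFitting G).map f ≤ genFitting H := by
  refine le_genFitting ((genFitting_normal G).map f hf) ?_
  exact (genFitting_qn G).of_surjective (f.subgroupMap _)
    (f.subgroupMap_surjective _)

theorem genFitting_map_equiv {G H : Type} [Group G] [Finite G] [Group H] [Finite H]
    (e : G ≃* H) : (genFitting G).map e.toMonoidHom = genFitting H := by
  refine le_antisymm (genFitting_map_le_of_surjective _ e.surjective) ?_
  have h1 : (genFitting H).map e.symm.toMonoidHom ≤ genFitting G :=
    genFitting_map_le_of_surjective _ e.symm.surjective
  have h2 := Subgroup.map_mono (f := e.toMonoidHom) h1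
  rw [Subgroup.map_map] at h2
  have h3 : e.toMonoidHom.comp e.symm.toMonoidHom = MonoidHom.id H := by
    ext x; simp
  rwa [h3, Subgroup.map_id] at h2

theorem genFitting_map_normal {G : Type} [Group G] [Finite G] {N : Subgroup G}
    (hNn : N.Normal) : (genFitting ↥N).map N.subtype ≤ genFitting G := by
  letI := hNn
  refine le_genFitting ⟨fun f hf g => ?_⟩ ?_
  · obtain ⟨y, hy, rfl⟩ := hf
    have he := genFitting_map_equiv (G := ↥N) (H := ↥N) (MulAut.conjNormal g)
    have : (MulAut.conjNormal g : MulAut ↥N) y ∈ genFitting ↥N := by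
      rw [← he]
      exact ⟨y, hy, rfl⟩
    refine ⟨_, this, ?_⟩
    simp
  · exact (genFitting_qn ↥N).of_mulEquiv
      (Subgroup.equivMapOfInjective _ N.subtype N.subtype_injective)

theorem genFitting_map_subnormal {G : Type} [Group G] [Finite G] {A : Subgroup G}
    (hs : IsSubnormalIn A) : (genFitting ↥A).map A.subtype ≤ genFitting G := by
  refine subnormal_descend
    (P := fun X => (genFitting ↥X).map X.subtype ≤ genFitting G) ?_ ?_ hs
  · show Subgroup.map (⊤ : Subgroup G).subtype (genFitting ↥(⊤ : Subgroup G)) ≤ genFitting G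
    have he := genFitting_map_equiv (Subgroup.topEquiv (G := G))
    have hcoe : (⊤ : Subgroup G).subtype = Subgroup.topEquiv.toMonoidHom := by
      ext x; rfl
    rw [hcoe, he]
  · intro X Y hle hnorm hY
    have h1 : (genFitting ↥(X.subgroupOf Y)).map (X.subgroupOf Y).subtype ≤
        genFitting ↥Y := genFitting_map_normal hnorm
    have he := genFitting_map_equiv (Subgroup.subgroupOfEquivOfLe hle)
    have hcomp : X.subtype.comp (Subgroup.subgroupOfEquivOfLe hle).toMonoidHom =
        Y.subtype.comp (X.subgroupOf Y).subtype := by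
      ext x; rfl
    have h2 : (genFitting ↥X).map X.subtype =
        ((genFitting ↥(X.subgroupOf Y)).map (X.subgroupOf Y).subtype).map Y.subtype := by
      rw [← he, Subgroup.map_map, Subgroup.map_map, hcomp]
    rw [h2]
    exact le_trans (Subgroup.map_mono h1) hY

theorem inf_genFitting_le_of_subnormal {G : Type} [Group G] [Finite G] {A : Subgroup G}
    (hs : IsSubnormalIn A) :
    genFitting G ⊓ A ≤ (genFitting ↥A).map A.subtype := by
  have hqnAF : IsQuasinilpotent ↥((A ⊓ genFitting G).subgroupOf (genFitting G)) :=
    isQuasinilpotent_of_subnormal (genFitting_qn G) (isSubnormalIn_inf hs)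
  have hqnAF' : IsQuasinilpotent ↥(A ⊓ genFitting G) :=
    hqnAF.of_mulEquiv (Subgroup.subgroupOfEquivOfLe inf_le_right)
  have hinv : SgInv A (A ⊓ genFitting G) := fun a ha x hx =>
    ⟨A.mul_mem (A.mul_mem ha hx.1) (A.inv_mem ha),
      (genFitting_normal G).conj_mem x hx.2 a⟩
  have hnorm : ((A ⊓ genFitting G).subgroupOf A).Normal :=
    normal_subgroupOf_of_sgInv hinv
  have hqn2 : IsQuasinilpotent ↥((A ⊓ genFitting G).subgroupOf A) :=
    hqnAF'.of_mulEquiv (Subgroup.subgroupOfEquivOfLe inf_le_left).symm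
  have h1 : (A ⊓ genFitting G).subgroupOf A ≤ genFitting ↥A :=
    le_genFitting hnorm hqn2
  intro x hx
  refine ⟨⟨x, hx.2⟩, h1 (Subgroup.mem_subgroupOf.mpr ⟨hx.2, hx.1⟩), rfl⟩

end GenFittingLemmas


section SeriesLemmas

/-- Normality of the terms of the iterated series. -/
theorem gSeries_normal (γ : GFun) (h : NormalValued γ) (G : Type) [Group G] [Finite G]
    (n : ℕ) : (gSeries γ h G n).Normal := (gSeriesAux γ h G n).2

theorem gSeries_le_succ (γ : GFun) (h : NormalValued γ) (G : Type) [Group G] [Finite G]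
    (n : ℕ) : gSeries γ h G n ≤ gSeries γ h G (n + 1) := by
  letI : (gSeries γ h G n).Normal := gSeries_normal γ h G n
  have hrfl : gSeries γ h G (n + 1) =
      (γ (G ⧸ gSeries γ h G n)).comap (QuotientGroup.mk' (gSeries γ h G n)) := rfl
  rw [hrfl]
  intro x hx
  have hx1 : QuotientGroup.mk' (gSeries γ h G n) x = 1 := by
    have : x ∈ (QuotientGroup.mk' (gSeries γ h G n)).ker := by
      rwa [QuotientGroup.ker_mk']
    exact MonoidHom.mem_ker.mp this
  simp only [Subgroup.mem_comap, hx1]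
  exact Subgroup.one_mem _

theorem gSeries_mono (γ : GFun) (h : NormalValued γ) (G : Type) [Group G] [Finite G]
    {m m' : ℕ} (hmm : m ≤ m') : gSeries γ h G m ≤ gSeries γ h G m' := by
  induction m', hmm using Nat.le_induction with
  | base => exact le_rfl
  | succ k hk ih => exact le_trans ih (gSeries_le_succ γ h G k)

theorem gSeries_top_mono (γ : GFun) (h : NormalValued γ) (G : Type) [Group G] [Finite G]
    {m m' : ℕ} (hmm : m ≤ m') (htop : gSeries γ h G m = ⊤) :
    gSeries γ h G m' = ⊤ :=
  eq_top_iff.mpr (htop ▸ gSeries_mono γ h G hmm)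

/-- The first term of the `F*`-series is the generalized Fitting subgroup. -/
theorem gSeries_one_genFitting (G : Type) [Group G] [Finite G] :
    gSeries genFitting genFitting_normal G 1 = genFitting G := by
  letI : (gSeries genFitting genFitting_normal G 0).Normal := gSeries_normal _ _ G 0
  have h0 : gSeries genFitting genFitting_normal G 0 = ⊥ := rfl
  have hrfl : gSeries genFitting genFitting_normal G 1 =
      (genFitting (G ⧸ gSeries genFitting genFitting_normal G 0)).comap
        (QuotientGroup.mk' (gSeries genFitting genFitting_normal G 0)) := rfl
  letI : ((⊥ : Subgroup G)).Normal := inferInstance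
  set π := QuotientGroup.mk' (gSeries genFitting genFitting_normal G 0) with hπ
  have hsurj : Function.Surjective π := QuotientGroup.mk'_surjective _
  have hinj : Function.Injective π := by
    intro a b hab
    have := mk'_eq_imp hab
    rw [h0] at this
    have h1 : a * b⁻¹ = 1 := by simpa using this
    exact mul_inv_eq_one.mp h1
  set e : G ≃* (G ⧸ gSeries genFitting genFitting_normal G 0) :=
    MulEquiv.ofBijective π ⟨hinj, hsurj⟩ with hedef
  have he : (genFitting G).map e.toMonoidHom =
      genFitting (G ⧸ gSeries genFitting genFitting_normal G 0) := genFitting_map_equiv e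
  rw [hrfl]
  ext x
  simp only [Subgroup.mem_comap]
  constructor
  · intro hx
    rw [← he] at hx
    obtain ⟨y, hy, hyx⟩ := hx
    have hyx' : π y = π x := hyx
    have : y = x := hinj hyx'
    rwa [← this]
  · intro hx
    rw [← he]
    refine ⟨x, hx, ?_⟩
    rfl

/-- Mapping the series along a surjection. -/
theorem gSeries_map_le {G H : Type} [Group G] [Finite G] [Group H] [Finite H]
    (f : G →* H) (hf : Function.Surjective f) :
    ∀ m : ℕ, (gSeries genFitting genFitting_normal G m).map f ≤
      gSeries genFitting genFitting_normal H m := by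
  intro m
  induction m with
  | zero =>
    have h0 : gSeries genFitting genFitting_normal G 0 = ⊥ := rfl
    have h0' : gSeries genFitting genFitting_normal H 0 = ⊥ := rfl
    rw [h0, h0', Subgroup.map_bot]
  | succ m ih =>
    set P := gSeries genFitting genFitting_normal G m with hP
    set Q := gSeries genFitting genFitting_normal H m with hQ
    letI : P.Normal := gSeries_normal _ _ G m
    letI : Q.Normal := gSeries_normal _ _ H m
    have hPQ : P ≤ Q.comap f := fun x hx => ih ⟨x, hx, rfl⟩
    set φ := QuotientGroup.map P Q f hPQ with hφ
    have hcomm : ∀ x : G, φ (QuotientGroup.mk' P x) = QuotientGroup.mk' Q (f x) := by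
      intro x
      exact QuotientGroup.map_mk' P Q f hPQ x
    have hφs : Function.Surjective φ := by
      intro z
      obtain ⟨y, rfl⟩ := QuotientGroup.mk'_surjective Q z
      obtain ⟨x, rfl⟩ := hf y
      exact ⟨QuotientGroup.mk' P x, hcomm x⟩
    have hrflG : gSeries genFitting genFitting_normal G (m + 1) =
        (genFitting (G ⧸ P)).comap (QuotientGroup.mk' P) := rfl
    have hrflH : gSeries genFitting genFitting_normal H (m + 1) =
        (genFitting (H ⧸ Q)).comap (QuotientGroup.mk' Q) := rfl
    rw [hrflG, hrflH]
    rintro _ ⟨x, hx, rfl⟩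
    simp only [Subgroup.mem_comap] at hx ⊢
    rw [← hcomm]
    exact genFitting_map_le_of_surjective φ hφs ⟨_, hx, rfl⟩

theorem gSeries_top_map {G H : Type} [Group G] [Finite G] [Group H] [Finite H]
    (f : G →* H) (hf : Function.Surjective f) {m : ℕ}
    (htop : gSeries genFitting genFitting_normal G m = ⊤) :
    gSeries genFitting genFitting_normal H m = ⊤ := by
  rw [eq_top_iff]
  have := Subgroup.map_mono (f := f) (le_of_eq htop.symm)
  calc (⊤ : Subgroup H) = (⊤ : Subgroup G).map f := by
        rw [Subgroup.map_top_of_surjective f hf]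
    _ ≤ (gSeries genFitting genFitting_normal G m).map f := by
        rw [htop]
    _ ≤ _ := gSeries_map_le f hf m

/-- Restructuring: the series of `G` is the pullback of the series of `G ⧸ F*(G)`. -/
theorem gSeries_succ_comap (G : Type) [Group G] [Finite G] (m : ℕ) :
    letI : (genFitting G).Normal := genFitting_normal G
    gSeries genFitting genFitting_normal G (m + 1) =
      (gSeries genFitting genFitting_normal (G ⧸ genFitting G) m).comap
        (QuotientGroup.mk' (genFitting G)) := by
  letI : (genFitting G).Normal := genFitting_normal G
  induction m with
  | zero =>
    have h0 : gSeries genFitting genFitting_normal (G ⧸ genFitting G) 0 = ⊥ := rfl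
    rw [gSeries_one_genFitting, h0]
    have : (⊥ : Subgroup (G ⧸ genFitting G)).comap (QuotientGroup.mk' (genFitting G)) =
        (QuotientGroup.mk' (genFitting G)).ker := rfl
    rw [this, QuotientGroup.ker_mk']
  | succ m ih =>
    set F := genFitting G with hF
    set P := gSeries genFitting genFitting_normal G (m + 1) with hP
    set Qb := gSeries genFitting genFitting_normal (G ⧸ F) m with hQb
    letI : P.Normal := gSeries_normal _ _ G (m + 1)
    letI : Qb.Normal := gSeries_normal _ _ (G ⧸ F) m
    have hFP : F ≤ P := by
      have h1 := gSeries_mono genFitting genFitting_normal G (show 1 ≤ m + 1 by omega)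
      rw [gSeries_one_genFitting] at h1
      exact h1
    set ψ : G →* (G ⧸ F) ⧸ Qb := (QuotientGroup.mk' Qb).comp (QuotientGroup.mk' F)
      with hψ
    have hψs : Function.Surjective ψ :=
      (QuotientGroup.mk'_surjective Qb).comp (QuotientGroup.mk'_surjective F)
    -- the two quotient maps with the same kernel
    have hkerψ : ∀ x : G, ψ x = 1 ↔ x ∈ P := by
      intro x
      rw [ih]
      simp only [hψ, MonoidHom.coe_comp, Function.comp_apply, Subgroup.mem_comap]
      constructor
      · intro hx
        have : QuotientGroup.mk' F x ∈ (QuotientGroup.mk' Qb).ker :=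
          MonoidHom.mem_ker.mpr hx
        rwa [QuotientGroup.ker_mk'] at this
      · intro hx
        have : QuotientGroup.mk' F x ∈ (QuotientGroup.mk' Qb).ker := by
          rwa [QuotientGroup.ker_mk']
        exact MonoidHom.mem_ker.mp this
    have hφ1 : ∀ x ∈ P, ψ x = 1 := fun x hx => (hkerψ x).mpr hx
    set φ : G ⧸ P →* (G ⧸ F) ⧸ Qb := QuotientGroup.lift P ψ hφ1 with hφdef
    have hφmk : ∀ x : G, φ (QuotientGroup.mk' P x) = ψ x := fun x => rfl
    have hφs : Function.Surjective φ := by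
      intro z
      obtain ⟨x, rfl⟩ := hψs z
      exact ⟨QuotientGroup.mk' P x, rfl⟩
    -- reverse map
    have hρ1 : ∀ x ∈ F, QuotientGroup.mk' P x = 1 := by
      intro x hx
      have : x ∈ (QuotientGroup.mk' P).ker := by
        rw [QuotientGroup.ker_mk']
        exact hFP hx
      exact MonoidHom.mem_ker.mp this
    set ρ : G ⧸ F →* G ⧸ P := QuotientGroup.lift F (QuotientGroup.mk' P) hρ1 with hρdef
    have hρ2 : ∀ z ∈ Qb, ρ z = 1 := by
      intro z hz
      obtain ⟨x, rfl⟩ := QuotientGroup.mk'_surjective F z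
      have hxP : x ∈ P := by
        rw [ih]
        simpa using hz
      have : x ∈ (QuotientGroup.mk' P).ker := by rwa [QuotientGroup.ker_mk']
      exact MonoidHom.mem_ker.mp this
    set φ' : (G ⧸ F) ⧸ Qb →* G ⧸ P := QuotientGroup.lift Qb ρ hρ2 with hφ'def
    have hφ'mk : ∀ x : G, φ' (ψ x) = QuotientGroup.mk' P x := fun x => rfl
    have hφ's : Function.Surjective φ' := by
      intro z
      obtain ⟨x, rfl⟩ := QuotientGroup.mk'_surjective P z
      exact ⟨ψ x, hφ'mk x⟩
    -- both sides computed
    have hrflG : gSeries genFitting genFitting_normal G (m + 2) =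
        (genFitting (G ⧸ P)).comap (QuotientGroup.mk' P) := rfl
    have hrflQ : gSeries genFitting genFitting_normal (G ⧸ F) (m + 1) =
        (genFitting ((G ⧸ F) ⧸ Qb)).comap (QuotientGroup.mk' Qb) := rfl
    rw [hrflG, hrflQ]
    ext x
    simp only [Subgroup.mem_comap]
    constructor
    · intro hx
      have h1 : φ (QuotientGroup.mk' P x) ∈ genFitting ((G ⧸ F) ⧸ Qb) :=
        genFitting_map_le_of_surjective φ hφs ⟨_, hx, rfl⟩
      rw [hφmk] at h1
      exact h1
    · intro hx
      have h1 : φ' (ψ x) ∈ genFitting (G ⧸ P) :=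
        genFitting_map_le_of_surjective φ' hφ's ⟨_, hx, rfl⟩
      rw [hφ'mk] at h1
      exact h1

end SeriesLemmas


section TransferLemmas

/-- The restriction of a quotient map to a subgroup, with explicit defeq control. -/
def resHom {G : Type} [Group G] {H : Type} [Group H] (f : G →* H) (A : Subgroup G) :
    ↥A →* ↥(A.map f) where
  toFun a := ⟨f a, ⟨a, a.2, rfl⟩⟩
  map_one' := Subtype.ext (by simp)
  map_mul' a b := Subtype.ext (by simp)

theorem resHom_surj {G : Type} [Group G] {H : Type} [Group H] (f : G →* H)
    (A : Subgroup G) : Function.Surjective (resHom f A) := by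
  rintro ⟨z, x, hx, rfl⟩
  exact ⟨⟨x, hx⟩, rfl⟩

theorem gSeries_top_of_subnormal :
    ∀ (m : ℕ) (G : Type) [Group G] [Finite G] (A : Subgroup G), IsSubnormalIn A →
      gSeries genFitting genFitting_normal G m = ⊤ →
      gSeries genFitting genFitting_normal ↥A m = ⊤ := by
  intro m
  induction m with
  | zero =>
    intro G _ _ A hs htop
    have h0 : gSeries genFitting genFitting_normal G 0 = ⊥ := rfl
    rw [h0] at htop
    have hone : ∀ g : G, g = 1 := by
      intro g
      have : g ∈ (⊥ : Subgroup G) := htop ▸ Subgroup.mem_top g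
      simpa using this
    have h0' : gSeries genFitting genFitting_normal ↥A 0 = ⊥ := rfl
    rw [h0', eq_top_iff]
    intro x _
    have : x = 1 := Subtype.ext (hone _)
    rw [this]
    exact Subgroup.one_mem _
  | succ m ih =>
    intro G _ _ A hs htop
    letI : (genFitting G).Normal := genFitting_normal G
    set π := QuotientGroup.mk' (genFitting G) with hπ
    have hπs : Function.Surjective π := QuotientGroup.mk'_surjective _
    have hq : gSeries genFitting genFitting_normal (G ⧸ genFitting G) m = ⊤ := by
      have hrw := gSeries_succ_comap G m
      rw [hrw] at htop
      calc gSeries genFitting genFitting_normal (G ⧸ genFitting G) m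
          = ((gSeries genFitting genFitting_normal (G ⧸ genFitting G) m).comap π).map π :=
            (Subgroup.map_comap_eq_self_of_surjective hπs _).symm
        _ = (⊤ : Subgroup G).map π := by rw [htop]
        _ = ⊤ := Subgroup.map_top_of_surjective π hπs
    have hA' : IsSubnormalIn (A.map π) := isSubnormalIn_map π hπs hs
    have h1 : gSeries genFitting genFitting_normal ↥(A.map π) m = ⊤ :=
      ih (G ⧸ genFitting G) (A.map π) hA' hq
    set χ : ↥A →* ↥(A.map π) := resHom π A with hχ
    have hχs : Function.Surjective χ := resHom_surj π A
    set e := QuotientGroup.quotientKerEquivOfSurjective χ hχs with hedef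
    have h2 : gSeries genFitting genFitting_normal (↥A ⧸ χ.ker) m = ⊤ :=
      gSeries_top_map e.symm.toMonoidHom e.symm.surjective h1
    letI : (genFitting ↥A).Normal := genFitting_normal ↥A
    have hker : χ.ker ≤ genFitting ↥A := by
      intro x hx
      have hx1 : π (x : G) = 1 := congrArg Subtype.val (MonoidHom.mem_ker.mp hx)
      have hxF : (x : G) ∈ genFitting G := by
        have : (x : G) ∈ π.ker := MonoidHom.mem_ker.mpr hx1
        rwa [hπ, QuotientGroup.ker_mk'] at this
      have : (x : G) ∈ (genFitting ↥A).map A.subtype :=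
        inf_genFitting_le_of_subnormal hs ⟨hxF, x.2⟩
      exact coe_mem_map_subtype_iff.mp this
    have hlift1 : ∀ x ∈ χ.ker, QuotientGroup.mk' (genFitting ↥A) x = 1 := by
      intro x hx
      have : x ∈ (QuotientGroup.mk' (genFitting ↥A)).ker := by
        rw [QuotientGroup.ker_mk']
        exact hker hx
      exact MonoidHom.mem_ker.mp this
    set θ : (↥A ⧸ χ.ker) →* (↥A ⧸ genFitting ↥A) :=
      QuotientGroup.lift χ.ker (QuotientGroup.mk' (genFitting ↥A)) hlift1 with hθ
    have hθs : Function.Surjective θ := by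
      intro z
      obtain ⟨x, rfl⟩ := QuotientGroup.mk'_surjective (genFitting ↥A) z
      exact ⟨QuotientGroup.mk x, rfl⟩
    have h3 : gSeries genFitting genFitting_normal (↥A ⧸ genFitting ↥A) m = ⊤ :=
      gSeries_top_map θ hθs h2
    have hrwA := gSeries_succ_comap ↥A m
    rw [hrwA, h3]
    exact Subgroup.comap_top _

theorem le_gSeries_of_subnormal :
    ∀ (m : ℕ) (G : Type) [Group G] [Finite G] (A : Subgroup G), IsSubnormalIn A →
      gSeries genFitting genFitting_normal ↥A m = ⊤ →
      A ≤ gSeries genFitting genFitting_normal G m := by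
  intro m
  induction m with
  | zero =>
    intro G _ _ A hs htop
    have h0 : gSeries genFitting genFitting_normal ↥A 0 = ⊥ := rfl
    rw [h0] at htop
    intro x hx
    have : (⟨x, hx⟩ : ↥A) ∈ (⊥ : Subgroup ↥A) := htop ▸ Subgroup.mem_top _
    have hx1 : x = 1 := by simpa using this
    have h0' : gSeries genFitting genFitting_normal G 0 = ⊥ := rfl
    rw [h0', hx1]
    exact Subgroup.one_mem _
  | succ m ih =>
    intro G _ _ A hs htop
    letI : (genFitting G).Normal := genFitting_normal G
    letI : (genFitting ↥A).Normal := genFitting_normal ↥A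
    set π := QuotientGroup.mk' (genFitting G) with hπ
    have hπs : Function.Surjective π := QuotientGroup.mk'_surjective _
    have hq : gSeries genFitting genFitting_normal (↥A ⧸ genFitting ↥A) m = ⊤ := by
      have hrw := gSeries_succ_comap ↥A m
      rw [hrw] at htop
      have hs' : Function.Surjective (QuotientGroup.mk' (genFitting ↥A)) :=
        QuotientGroup.mk'_surjective _
      calc gSeries genFitting genFitting_normal (↥A ⧸ genFitting ↥A) m
          = ((gSeries genFitting genFitting_normal (↥A ⧸ genFitting ↥A) m).comap
              (QuotientGroup.mk' (genFitting ↥A))).map (QuotientGroup.mk' (genFitting ↥A)) :=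
            (Subgroup.map_comap_eq_self_of_surjective hs' _).symm
        _ = (⊤ : Subgroup ↥A).map (QuotientGroup.mk' (genFitting ↥A)) := by rw [htop]
        _ = ⊤ := Subgroup.map_top_of_surjective _ hs'
    set χ : ↥A →* ↥(A.map π) := resHom π A with hχ
    have hχs : Function.Surjective χ := resHom_surj π A
    have hFAker : ∀ y ∈ genFitting ↥A, χ y = 1 := by
      intro y hy
      have h1 : (y : G) ∈ genFitting G :=
        genFitting_map_subnormal hs ⟨y, hy, rfl⟩
      have h2 : π (y : G) = 1 := by
        have : (y : G) ∈ π.ker := by rw [hπ, QuotientGroup.ker_mk']; exact h1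
        exact MonoidHom.mem_ker.mp this
      exact Subtype.ext h2
    set θ : (↥A ⧸ genFitting ↥A) →* ↥(A.map π) :=
      QuotientGroup.lift (genFitting ↥A) χ hFAker with hθ
    have hθs : Function.Surjective θ := by
      intro z
      obtain ⟨x, rfl⟩ := hχs z
      exact ⟨QuotientGroup.mk x, rfl⟩
    have h1 : gSeries genFitting genFitting_normal ↥(A.map π) m = ⊤ :=
      gSeries_top_map θ hθs hq
    have hA' : IsSubnormalIn (A.map π) := isSubnormalIn_map π hπs hs
    have h2 : A.map π ≤ gSeries genFitting genFitting_normal (G ⧸ genFitting G) m :=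
      ih (G ⧸ genFitting G) (A.map π) hA' h1
    have hrw := gSeries_succ_comap G m
    rw [hrw]
    intro x hx
    simp only [Subgroup.mem_comap]
    exact h2 ⟨x, hx, rfl⟩

theorem enat_sInf_mem {S : Set ℕ∞} (h : S.Nonempty) : sInf S ∈ S := by
  classical
  set T : Set ℕ := {m : ℕ | (m : ℕ∞) ∈ S} with hT
  by_cases hTne : T.Nonempty
  · have hmem : ((sInf T : ℕ) : ℕ∞) ∈ S := Nat.sInf_mem hTne
    have heq : sInf S = ((sInf T : ℕ) : ℕ∞) := by
      refine le_antisymm (sInf_le hmem) (le_sInf ?_)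
      intro b hb
      cases b with
      | top => exact le_top
      | coe m =>
        have : m ∈ T := hb
        exact_mod_cast Nat.sInf_le this
    rw [heq]
    exact hmem
  · have hS : S = {⊤} := by
      apply Set.eq_singleton_iff_nonempty_unique_mem.mpr
      refine ⟨h, fun b hb => ?_⟩
      cases b with
      | top => rfl
      | coe m => exact absurd ⟨m, hb⟩ hTne
    rw [hS]
    simp

end TransferLemmas

/-- the generalized Fitting height of a join of subnormal subgroups is the
maximum of the generalized Fitting heights of the subgroups. -/
theorem hStar_join_subnormal (G : Type) [Group G] [Finite G] (n : ℕ) (A : Fin n → Subgroup G)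
    (hsub : ∀ i, IsSubnormalIn (A i)) (hsup : ⨆ i, A i = ⊤) :
    hStar G = ⨆ i, hStar ↥(A i) := by
  classical
  have hform : ∀ (X : Type) [Group X] [Finite X], hStar X =
      sInf {nn : ℕ∞ | ∃ m : ℕ, nn = (m : ℕ∞) ∧
        gSeries genFitting genFitting_normal X m = ⊤} := fun X _ _ => rfl
  have dir1 : ∀ i, hStar ↥(A i) ≤ hStar G := by
    intro i
    rw [hform G, hform ↥(A i)]
    refine sInf_le_sInf ?_
    rintro x ⟨m, rfl, hm⟩
    exact ⟨m, rfl, gSeries_top_of_subnormal m G (A i) (hsub i) hm⟩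
  refine le_antisymm ?_ (iSup_le dir1)
  by_cases htop : (⨆ i, hStar ↥(A i)) = ⊤
  · rw [htop]; exact le_top
  · obtain ⟨M, hM⟩ : ∃ M : ℕ, (⨆ i, hStar ↥(A i)) = (M : ℕ∞) := by
      cases hsupv : (⨆ i, hStar ↥(A i)) with
      | top => exact absurd hsupv htop
      | coe M => exact ⟨M, rfl⟩
    have hAi : ∀ i, A i ≤ gSeries genFitting genFitting_normal G M := by
      intro i
      have hle : hStar ↥(A i) ≤ (M : ℕ∞) := hM ▸ le_iSup (fun i => hStar ↥(A i)) i
      have hne : {nn : ℕ∞ | ∃ m : ℕ, nn = (m : ℕ∞) ∧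
          gSeries genFitting genFitting_normal ↥(A i) m = ⊤}.Nonempty := by
        by_contra hcon
        rw [Set.not_nonempty_iff_eq_empty] at hcon
        have h1 : hStar ↥(A i) = ⊤ := by
          rw [hform ↥(A i), hcon, sInf_empty]
        rw [h1] at hle
        have := top_le_iff.mp hle
        exact absurd this.symm (by simp)
      have hmem : hStar ↥(A i) ∈ {nn : ℕ∞ | ∃ m : ℕ, nn = (m : ℕ∞) ∧
          gSeries genFitting genFitting_normal ↥(A i) m = ⊤} := by
        rw [hform ↥(A i)]
        exact enat_sInf_mem hne
      obtain ⟨m, hmeq, hmtop⟩ := hmem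
      have hmM : m ≤ M := by
        rw [hmeq] at hle
        exact_mod_cast hle
      exact le_gSeries_of_subnormal M G (A i) (hsub i)
        (gSeries_top_mono _ _ _ hmM hmtop)
    have hTop : gSeries genFitting genFitting_normal G M = ⊤ := by
      rw [eq_top_iff, ← hsup]
      exact iSup_le hAi
    have hfin : hStar G ≤ (M : ℕ∞) := by
      rw [hform G]
      exact sInf_le ⟨M, rfl, hTop⟩
    rw [hM]
    exact hfin
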